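/- arXiv:2410.07807 — 8 statements merged into one kernel-verified Lean document; each statement's English description precedes it below -/
import Mathlib

section
/- For every integer m, the integral over [0, 2π] of (1 − cos(m z))/(1 − cos z) dz equals 2π|m|. -/
noncomputable def FK : ℕ → ℝ → ℝ
  | 0, _ => 0
  | 1, _ => 1
  | (n+2), z => 2 * FK (n+1) z - FK n z + 2 * Real.cos ((n+1) * z)

theorem FK_key : ∀ (n : ℕ) (z : ℝ), 1 - Real.cos (n * z) = (1 - Real.cos z) * FK n z
  | 0, z => by simp [FK]
  | 1, z => by simp [FK]
  | (n+2), z => by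
    have h1 := FK_key (n+1) z
    have h0 := FK_key n z
    have e1 : ((n:ℝ)+2)*z = ((n:ℝ)+1)*z + z := by ring
    have e2 : (n:ℝ)*z = ((n:ℝ)+1)*z - z := by ring
    push_cast at h1
    rw [e2, Real.cos_sub] at h0
    simp only [FK]
    push_cast
    rw [e1, Real.cos_add]
    linear_combination 2*h1 - h0

theorem FK_cont : ∀ n, Continuous (FK n)
  | 0 => by simp only [FK]; exact continuous_const
  | 1 => by simp only [FK]; exact continuous_const
  | (n+2) => by
    simp only [FK]
    exact ((continuous_const.mul (FK_cont (n+1))).sub (FK_cont n)).add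
      (continuous_const.mul (Real.continuous_cos.comp (continuous_const.mul continuous_id)))

theorem cos_int : ∀ (k : ℕ), ∫ z in (0:ℝ)..(2*Real.pi), Real.cos ((k+1) * z) = 0 := by
  intro k
  have hc : ((k:ℝ)+1) ≠ 0 := by positivity
  rw [intervalIntegral.integral_comp_mul_left (fun x => Real.cos x) hc]
  have : ((k:ℝ)+1) * (2*Real.pi) = (2*(k+1) : ℤ) * Real.pi := by push_cast; ring
  rw [mul_zero, this]
  rw [integral_cos, Real.sin_int_mul_pi, Real.sin_zero, sub_zero, smul_zero]

theorem FK_int : ∀ n, ∫ z in (0:ℝ)..(2*Real.pi), FK n z = 2*Real.pi*n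
  | 0 => by simp [FK]
  | 1 => by simp [FK]
  | (n+2) => by
    have i1 := FK_int (n+1)
    have i0 := FK_int n
    have c1 := (FK_cont (n+1)).intervalIntegrable (μ := MeasureTheory.volume) 0 (2*Real.pi)
    have c0 := (FK_cont n).intervalIntegrable (μ := MeasureTheory.volume) 0 (2*Real.pi)
    have ccos : IntervalIntegrable (fun z => 2 * Real.cos (((n:ℝ)+1) * z)) MeasureTheory.volume 0 (2*Real.pi) :=
      (continuous_const.mul (Real.continuous_cos.comp (continuous_const.mul continuous_id))).intervalIntegrable 0 (2*Real.pi)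
    simp only [FK]
    push_cast
    rw [intervalIntegral.integral_add ((c1.const_mul 2).sub c0) ccos,
      intervalIntegral.integral_sub (c1.const_mul 2) c0,
      intervalIntegral.integral_const_mul, intervalIntegral.integral_const_mul,
      i1, i0, cos_int n]
    push_cast; ring

/-- `∫₀^{2π} (1 - cos(mz))/(1 - cos z) dz = 2π|m|` for every integer `m`. -/
theorem stmt_1 (m : ℤ) :
    ∫ z in (0 : ℝ)..(2 * Real.pi), (1 - Real.cos (m * z)) / (1 - Real.cos z)
      = 2 * Real.pi * |(m : ℝ)| := by
  set n := m.natAbs with hn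
  have hnm : ((n : ℝ)) = |(m : ℝ)| := by rw [hn, Nat.cast_natAbs]; exact Int.cast_abs
  have hcos : ∀ z : ℝ, Real.cos ((m:ℝ) * z) = Real.cos ((n:ℝ) * z) := by
    intro z
    rcases abs_cases ((m:ℝ)) with ⟨h, _⟩ | ⟨h, _⟩
    · rw [hnm, h]
    · rw [hnm, h, neg_mul, Real.cos_neg]
  have hS : MeasureTheory.volume {x : ℝ | Real.cos x = 1} = 0 := by
    refine MeasureTheory.measure_mono_null (fun x hx => ?_)
      ((Set.countable_range (fun k : ℤ => (k:ℝ) * (2*Real.pi))).measure_zero _)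
    obtain ⟨k, hk⟩ := (Real.cos_eq_one_iff x).mp hx
    exact ⟨k, hk⟩
  have hae : ∀ᵐ x : ℝ, Real.cos x ≠ 1 := by
    rw [MeasureTheory.ae_iff]
    simpa using hS
  have heq : ∫ z in (0 : ℝ)..(2 * Real.pi), (1 - Real.cos (m * z)) / (1 - Real.cos z)
      = ∫ z in (0 : ℝ)..(2 * Real.pi), FK n z := by
    refine intervalIntegral.integral_congr_ae ?_
    filter_upwards [hae] with z hz _
    have h1 : 1 - Real.cos z ≠ 0 := sub_ne_zero.mpr (Ne.symm hz)
    rw [hcos z, FK_key n z, mul_comm, mul_div_assoc, div_self h1, mul_one]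
  rw [heq, FK_int n, hnm]
end

section
/- For every integer m, the limit as ε → 0⁺ of the integral over [ε, 2π−ε] of (1 − e^{i m z})/(1 − cos z) dz equals 2π|m|. -/
/-!
The reflection `z ↦ 2π - z` preserves `[ε, 2π - ε]`, and for `f z = (1 - e^{imz}) / (1 - cos z)`
it gives `f z + f (2π - z) = 2 (1 - cos (m z)) / (1 - cos z)`. This quotient is the trigonometric
polynomial `fejerSum |m|` (`|m|` times the Fejér kernel), so after symmetrization the singularity
at the endpoints disappears and the integrals converge to `∫₀^{2π} fejerSum |m| = 2π |m|`.
-/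

open Real intervalIntegral Filter Topology Set MeasureTheory

-- The recursion is `cos ((n + 2) z) + cos (n z) = 2 cos z cos ((n + 1) z)` divided by `1 - cos z`.
noncomputable def fejerSum : ℕ → ℝ → ℝ
  | 0 => fun _ => 0
  | 1 => fun _ => 1
  | n + 2 => fun z => 2 * cos ((n + 1) * z) + 2 * fejerSum (n + 1) z - fejerSum n z

@[fun_prop]
theorem continuous_fejerSum : ∀ n, Continuous (fejerSum n)
  | 0 => continuous_const
  | 1 => continuous_const
  | n + 2 => by
    have := continuous_fejerSum n
    have := continuous_fejerSum (n + 1)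
    simp only [fejerSum]
    fun_prop

theorem one_sub_cos_mul_fejerSum (z : ℝ) : ∀ n : ℕ, (1 - cos z) * fejerSum n z = 1 - cos (n * z)
  | 0 => by simp [fejerSum]
  | 1 => by simp [fejerSum]
  | n + 2 => by
    have h₁ := one_sub_cos_mul_fejerSum z (n + 1)
    have h₀ := one_sub_cos_mul_fejerSum z n
    have hcos : cos ((n + 2) * z) + cos (n * z) = 2 * cos z * cos ((n + 1) * z) := by
      rw [show (n + 2) * z = (n + 1) * z + z by ring, show n * z = (n + 1) * z - z by ring,
        cos_add, cos_sub]
      ring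
    simp only [fejerSum]
    push_cast at *
    linear_combination 2 * h₁ - h₀ + hcos

theorem one_sub_cos_mul_fejerSum_natAbs (m : ℤ) (z : ℝ) :
    (1 - cos z) * fejerSum m.natAbs z = 1 - cos (m * z) := by
  rw [one_sub_cos_mul_fejerSum, Nat.cast_natAbs, Int.cast_abs]
  rcases abs_choice (m : ℝ) with h | h <;> simp [h]

theorem integral_cos_nat_mul_eq_zero {k : ℕ} (hk : k ≠ 0) :
    ∫ z in (0 : ℝ)..2 * π, cos (k * z) = 0 := by
  rw [intervalIntegral.integral_comp_mul_left _ (Nat.cast_ne_zero.mpr hk), integral_cos,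
    mul_zero, sin_zero, show (k : ℝ) * (2 * π) = (2 * k : ℕ) * π by push_cast; ring,
    sin_nat_mul_pi, sub_zero, smul_zero]

theorem integral_fejerSum : ∀ n : ℕ, ∫ z in (0 : ℝ)..2 * π, fejerSum n z = 2 * π * n
  | 0 => by simp [fejerSum]
  | 1 => by simp [fejerSum]
  | n + 2 => by
    have hcos : ∫ z in (0 : ℝ)..2 * π, cos ((n + 1) * z) = 0 := by
      exact_mod_cast integral_cos_nat_mul_eq_zero n.succ_ne_zero
    have hint : ∀ {g : ℝ → ℝ}, Continuous g → IntervalIntegrable g volume 0 (2 * π) :=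
      fun hg => hg.intervalIntegrable _ _
    simp only [fejerSum]
    rw [integral_sub (hint (by fun_prop))
        (hint (continuous_fejerSum n)),
      integral_add (hint (by fun_prop)) (hint (by fun_prop)),
      intervalIntegral.integral_const_mul, intervalIntegral.integral_const_mul, hcos, integral_fejerSum (n + 1),
      integral_fejerSum n]
    push_cast
    ring

theorem tendsto_integral_add_sub_nhds_zero {E : Type*} [NormedAddCommGroup E] [NormedSpace ℝ E]
    [CompleteSpace E] {g : ℝ → E} (hg : ∀ a b, IntervalIntegrable g volume a b) (a b : ℝ) :
    Tendsto (fun ε => ∫ x in a + ε..b - ε, g x) (𝓝 0) (𝓝 (∫ x in a..b, g x)) := by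
  have hF := continuous_primitive hg a
  have hcont : Continuous fun ε => (∫ x in a..b - ε, g x) - ∫ x in a..a + ε, g x := by
    fun_prop
  convert hcont.tendsto' 0 (∫ x in a..b, g x) (by simp) using 2 with ε
  exact (integral_interval_sub_left (hg _ _) (hg _ _)).symm

theorem integral_eq_of_add_comp_reflect {E : Type*} [NormedAddCommGroup E] [NormedSpace ℝ E]
    [CompleteSpace E] {f g : ℝ → E} {a b : ℝ} (hf : IntervalIntegrable f volume a b)
    (h : ∀ x ∈ uIcc a b, f x + f (a + b - x) = (2 : ℝ) • g x) :
    ∫ x in a..b, f x = ∫ x in a..b, g x := by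
  have hreflect : IntervalIntegrable (fun x => f (a + b - x)) volume a b := by
    simpa using (hf.comp_sub_left (a + b)).symm
  apply smul_right_injective E (two_ne_zero : (2 : ℝ) ≠ 0)
  calc (2 : ℝ) • ∫ x in a..b, f x = (∫ x in a..b, f x) + ∫ x in a..b, f (a + b - x) := by
        rw [integral_comp_sub_left, two_smul]; simp
    _ = ∫ x in a..b, (2 : ℝ) • g x := by rw [← integral_add hf hreflect, integral_congr h]
    _ = (2 : ℝ) • ∫ x in a..b, g x := integral_smul _ _

theorem cos_ne_one_of_mem_Ioo {z : ℝ} (hz : z ∈ Ioo 0 (2 * π)) : cos z ≠ 1 := by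
  rw [Ne, cos_eq_one_iff_of_lt_of_lt (by linarith [hz.1, pi_pos]) hz.2]
  exact hz.1.ne'

theorem one_sub_exp_add_one_sub_exp_two_pi_sub (m : ℤ) (z : ℝ) :
    (1 - Complex.exp (Complex.I * m * z)) + (1 - Complex.exp (Complex.I * m * (2 * π - z : ℝ)))
      = 2 * ((1 - cos (m * z) : ℝ) : ℂ) := by
  have hperiodic : Complex.exp (Complex.I * m * (2 * π - z : ℝ))
      = Complex.exp (-(m * z : ℝ) * Complex.I) := by
    rw [show Complex.I * m * (2 * π - z : ℝ) = m * (2 * π * Complex.I) + -(m * z : ℝ) * Complex.I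
      by push_cast; ring, Complex.exp_add, Complex.exp_int_mul_two_pi_mul_I, one_mul]
  rw [hperiodic, show Complex.I * m * z = (m * z : ℝ) * Complex.I by push_cast; ring]
  push_cast
  linear_combination Complex.two_cos ((m : ℂ) * z)

theorem one_sub_exp_div_add_two_pi_sub (m : ℤ) {z : ℝ} (hz : cos z ≠ 1) :
    (1 - Complex.exp (Complex.I * m * z)) / ((1 - cos z : ℝ) : ℂ)
      + (1 - Complex.exp (Complex.I * m * (2 * π - z : ℝ))) / ((1 - cos (2 * π - z) : ℝ) : ℂ)
      = (2 : ℝ) • (fejerSum m.natAbs z : ℂ) := by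
  have hden : ((1 - cos z : ℝ) : ℂ) ≠ 0 := by exact_mod_cast sub_ne_zero.mpr hz.symm
  rw [Complex.real_smul, cos_two_pi_sub, ← add_div, one_sub_exp_add_one_sub_exp_two_pi_sub,
    div_eq_iff hden, ← one_sub_cos_mul_fejerSum_natAbs]
  push_cast
  ring

/-- `lim_{ε→0⁺} ∫_ε^{2π-ε} (1 - e^{imz})/(1 - cos z) dz = 2π|m|` in `ℂ`. -/
theorem stmt_2 (m : ℤ) :
    Filter.Tendsto
      (fun ε : ℝ => ∫ z in ε..(2 * Real.pi - ε),
        ((1 : ℂ) - Complex.exp (Complex.I * (m : ℂ) * (z : ℂ)))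
          / (((1 - Real.cos z : ℝ) : ℂ)))
      (nhdsWithin 0 (Set.Ioi 0))
      (nhds ((2 * Real.pi * |(m : ℝ)| : ℝ) : ℂ)) := by
  have hfejer : Tendsto (fun ε : ℝ => ∫ z in ε..2 * π - ε, (fejerSum m.natAbs z : ℂ))
      (𝓝[>] 0) (𝓝 ((2 * π * |(m : ℝ)| : ℝ) : ℂ)) := by
    have hcont : Continuous fun z => (fejerSum m.natAbs z : ℂ) := by fun_prop
    have := tendsto_integral_add_sub_nhds_zero (fun a b => hcont.intervalIntegrable a b) 0 (2 * π)
    simpa [integral_ofReal, integral_fejerSum, Nat.cast_natAbs] using this.mono_left nhdsWithin_le_nhds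
  refine hfejer.congr' ?_
  filter_upwards [Ioo_mem_nhdsGT pi_pos] with ε ⟨hε₀, hεπ⟩
  have hcos : ∀ z ∈ uIcc ε (2 * π - ε), cos z ≠ 1 := fun z hz => by
    rw [uIcc_of_le (by linarith)] at hz
    exact cos_ne_one_of_mem_Ioo ⟨by linarith [hz.1], by linarith [hz.2]⟩
  symm
  refine integral_eq_of_add_comp_reflect (ContinuousOn.intervalIntegrable ?_) fun z hz => ?_
  · refine ContinuousOn.div (by fun_prop) (by fun_prop) fun z hz => ?_
    exact_mod_cast sub_ne_zero.mpr (hcos z hz).symm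
  · rw [show ε + (2 * π - ε) - z = 2 * π - z by ring]
    exact one_sub_exp_div_add_two_pi_sub m (hcos z hz)
end

section
/- Let k, ℓ, m be nonnegative integers with k + ℓ − m ≥ 0. Then the limit as ε → 0⁺ of the integral over [ε, 2π−ε] of (1 − e^{ikz})(1 − e^{iℓz})(1 − e^{−imz})/(1 − cos z) dz equals 2π(k + ℓ − |ℓ − m| − |k − m|). -/
open Complex Finset in
lemma aux_eq (k l m : ℕ) {z : ℝ} (hz : Real.cos z ≠ 1) :
    ((1 : ℂ) - Complex.exp (Complex.I * (k : ℂ) * (z : ℂ)))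
      * ((1 : ℂ) - Complex.exp (Complex.I * (l : ℂ) * (z : ℂ)))
      * ((1 : ℂ) - Complex.exp (-Complex.I * (m : ℂ) * (z : ℂ)))
      / (((1 - Real.cos z : ℝ) : ℂ))
    = 2 * (∑ a ∈ Finset.range k, Complex.exp (Complex.I * z) ^ a)
        * (1 - Complex.exp (Complex.I * (l : ℂ) * z))
        * (∑ b ∈ Finset.range m, Complex.exp (-(Complex.I * (z:ℂ))) ^ b) := by
  set u := Complex.exp (Complex.I * z) with hu
  set v := Complex.exp (-(Complex.I * (z:ℂ))) with hv
  have huv : u * v = 1 := by rw [hu, hv, ← Complex.exp_add]; simp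
  have e1 : Complex.exp ((z:ℂ) * I) = u := by rw [hu]; congr 1; ring
  have e2 : Complex.exp (-((z:ℂ)) * I) = v := by rw [hv]; congr 1; ring
  have hD : (((1 - Real.cos z : ℝ) : ℂ)) = (1 - u) * (1 - v) / 2 := by
    push_cast
    rw [Complex.cos, e1, e2]
    linear_combination (-1/2 : ℂ) * huv
  have hD2 : ((1:ℂ) - u) * (1 - v) / 2 ≠ 0 := by
    rw [← hD]
    simp only [ne_eq, Complex.ofReal_eq_zero, sub_eq_zero]
    exact fun hh => hz hh.symm
  have hk : Complex.exp (Complex.I * (k : ℂ) * (z : ℂ)) = u ^ k := by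
    rw [hu, ← Complex.exp_nat_mul]; congr 1; ring
  have hm : Complex.exp (-Complex.I * (m : ℂ) * (z : ℂ)) = v ^ m := by
    rw [hv, ← Complex.exp_nat_mul]; congr 1; ring
  have hS : (1:ℂ) - u ^ k = (∑ a ∈ Finset.range k, u ^ a) * (1 - u) := by
    linear_combination geom_sum_mul u k
  have hT : (1:ℂ) - v ^ m = (∑ b ∈ Finset.range m, v ^ b) * (1 - v) := by
    linear_combination geom_sum_mul v m
  rw [hk, hm, hS, hT, hD, div_eq_iff hD2]
  ring
open Complex Finset in
lemma aux_sum (k l m : ℕ) (z : ℝ) :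
    2 * (∑ a ∈ Finset.range k, Complex.exp (Complex.I * z) ^ a)
        * (1 - Complex.exp (Complex.I * (l : ℂ) * z))
        * (∑ b ∈ Finset.range m, Complex.exp (-(Complex.I * (z:ℂ))) ^ b)
    = ∑ a ∈ Finset.range k, ∑ b ∈ Finset.range m,
        (2 * Complex.exp (Complex.I * (((a:ℤ) - (b:ℤ) : ℤ) : ℂ) * z)
          - 2 * Complex.exp (Complex.I * (((a:ℤ) + (l:ℤ) - (b:ℤ) : ℤ) : ℂ) * z)) := by
  have hterm : ∀ a b : ℕ,
      (2 * Complex.exp (Complex.I * (((a:ℤ) - (b:ℤ) : ℤ) : ℂ) * z)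
        - 2 * Complex.exp (Complex.I * (((a:ℤ) + (l:ℤ) - (b:ℤ) : ℤ) : ℂ) * z))
      = 2 * Complex.exp (Complex.I * z) ^ a * (1 - Complex.exp (Complex.I * (l:ℂ) * z))
          * Complex.exp (-(Complex.I * (z:ℂ))) ^ b := by
    intro a b
    have h1 : Complex.exp (Complex.I * (((a:ℤ) - (b:ℤ) : ℤ) : ℂ) * z)
        = Complex.exp (Complex.I * (z:ℂ)) ^ a * Complex.exp (-(Complex.I * (z:ℂ))) ^ b := by
      rw [← Complex.exp_nat_mul, ← Complex.exp_nat_mul, ← Complex.exp_add]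
      congr 1; push_cast; ring
    have h2 : Complex.exp (Complex.I * (((a:ℤ) + (l:ℤ) - (b:ℤ) : ℤ) : ℂ) * z)
        = Complex.exp (Complex.I * (z:ℂ)) ^ a * Complex.exp (Complex.I * (l:ℂ) * z)
            * Complex.exp (-(Complex.I * (z:ℂ))) ^ b := by
      rw [← Complex.exp_nat_mul, ← Complex.exp_nat_mul, ← Complex.exp_add, ← Complex.exp_add]
      congr 1; push_cast; ring
    rw [h1, h2]; ring
  rw [Finset.sum_congr rfl fun a _ => Finset.sum_congr rfl fun b _ => hterm a b]
  simp only [Finset.mul_sum, Finset.sum_mul]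
  rw [Finset.sum_comm]
open Complex Finset intervalIntegral in
lemma aux_int (n : ℤ) :
    ∫ z in (0:ℝ)..(2*Real.pi), Complex.exp (Complex.I * (n:ℂ) * z) =
      if n = 0 then ((2*Real.pi : ℝ) : ℂ) else 0 := by
  rcases eq_or_ne n 0 with rfl | hn
  · simp
  · rw [if_neg hn]
    have hc : (Complex.I * (n:ℂ)) ≠ 0 := by simp [Complex.I_ne_zero, hn]
    rw [show (fun z : ℝ => Complex.exp (Complex.I * n * z)) = fun z : ℝ => Complex.exp ((Complex.I * n) * z) from rfl]
    rw [integral_exp_mul_complex hc]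
    have h1 : Complex.I * n * ((2*Real.pi : ℝ):ℂ) = (n:ℂ) * (2 * Real.pi * Complex.I) := by
      push_cast; ring
    rw [h1, Complex.exp_int_mul_two_pi_mul_I]
    simp

open Complex Finset intervalIntegral in
lemma aux_val (k l m : ℕ) :
    (∫ z in (0:ℝ)..(2*Real.pi), ∑ a ∈ Finset.range k, ∑ b ∈ Finset.range m,
        (2 * Complex.exp (Complex.I * (((a:ℤ) - (b:ℤ) : ℤ) : ℂ) * z)
          - 2 * Complex.exp (Complex.I * (((a:ℤ) + (l:ℤ) - (b:ℤ) : ℤ) : ℂ) * z)))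
    = 2 * ((min k m : ℕ) : ℂ) * ((2*Real.pi : ℝ) : ℂ)
        - 2 * ((min k (m - l) : ℕ) : ℂ) * ((2*Real.pi : ℝ) : ℂ) := by
  have hci : ∀ n : ℤ, IntervalIntegrable (fun z : ℝ => Complex.exp (Complex.I * (n:ℂ) * z))
      MeasureTheory.volume 0 (2*Real.pi) := by
    intro n
    exact (by fun_prop : Continuous fun z : ℝ => Complex.exp (Complex.I * (n:ℂ) * z)).intervalIntegrable _ _
  have hterm : ∀ n₁ n₂ : ℤ,
      (∫ z in (0:ℝ)..(2*Real.pi),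
        (2 * Complex.exp (Complex.I * (n₁:ℂ) * z) - 2 * Complex.exp (Complex.I * (n₂:ℂ) * z)))
      = 2 * (if n₁ = 0 then ((2*Real.pi : ℝ):ℂ) else 0) - 2 * (if n₂ = 0 then ((2*Real.pi : ℝ):ℂ) else 0) := by
    intro n₁ n₂
    rw [intervalIntegral.integral_sub ((hci n₁).const_mul 2) ((hci n₂).const_mul 2),
      intervalIntegral.integral_const_mul, intervalIntegral.integral_const_mul,
      aux_int, aux_int]
  rw [intervalIntegral.integral_finset_sum]
  swap
  · intro a _
    exact (by fun_prop : Continuous fun z : ℝ => ∑ b ∈ Finset.range m,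
      (2 * Complex.exp (Complex.I * (((a:ℤ) - (b:ℤ) : ℤ) : ℂ) * z)
        - 2 * Complex.exp (Complex.I * (((a:ℤ) + (l:ℤ) - (b:ℤ) : ℤ) : ℂ) * z))).intervalIntegrable _ _
  rw [Finset.sum_congr rfl fun a _ => intervalIntegral.integral_finset_sum
    (fun b _ => ((hci _).const_mul 2).sub ((hci _).const_mul 2))]
  rw [Finset.sum_congr rfl fun a _ => Finset.sum_congr rfl fun b _ => hterm _ _]
  have c1 : ∀ a b : ℕ, ((a:ℤ) - (b:ℤ) = 0) = (b = a) := by intro a b; simp; omega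
  have c2 : ∀ a b : ℕ, ((a:ℤ) + (l:ℤ) - (b:ℤ) = 0) = (b = a + l) := by intro a b; simp; omega
  simp only [c1, c2]
  have hinner : ∀ a : ℕ,
      (∑ b ∈ Finset.range m, (2 * (if b = a then ((2*Real.pi : ℝ):ℂ) else 0)
        - 2 * (if b = a + l then ((2*Real.pi : ℝ):ℂ) else 0)))
      = (if a ∈ Finset.range m then 2 * ((2*Real.pi : ℝ):ℂ) else 0)
        - (if a + l ∈ Finset.range m then 2 * ((2*Real.pi : ℝ):ℂ) else 0) := by
    intro a
    rw [Finset.sum_sub_distrib]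
    congr 1 <;> simp [← Finset.mul_sum, Finset.sum_ite_eq', mul_ite]
  rw [Finset.sum_congr rfl fun a _ => hinner a, Finset.sum_sub_distrib]
  have hr : ∀ p : ℕ, (∑ a ∈ Finset.range k, if a ∈ Finset.range p then 2 * ((2*Real.pi:ℝ):ℂ) else 0)
      = 2 * ((min k p : ℕ) : ℂ) * ((2*Real.pi : ℝ) : ℂ) := by
    intro p
    rw [Finset.sum_ite_mem, Finset.sum_const,
      show Finset.range k ∩ Finset.range p = Finset.range (min k p) from by ext x; simp [Nat.lt_min]]
    simp [Finset.card_range]; ring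
  rw [hr]
  have : ∀ a : ℕ, (a + l ∈ Finset.range m) = (a ∈ Finset.range (m - l)) := by
    intro a; simp [Finset.mem_range]; omega
  simp only [this]
  rw [hr]
open Complex Finset intervalIntegral Filter Set in
/-- The cubic interaction integral:
`lim_{ε→0⁺} ∫_ε^{2π-ε} (1-e^{ikz})(1-e^{iℓz})(1-e^{-imz})/(1-cos z) dz
  = 2π(k + ℓ - |ℓ-m| - |k-m|)` for nonnegative integers with `k + ℓ - m ≥ 0`. -/
theorem stmt_3 (k l m : ℕ) (h : m ≤ k + l) :
    Filter.Tendsto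
      (fun ε : ℝ => ∫ z in ε..(2 * Real.pi - ε),
        ((1 : ℂ) - Complex.exp (Complex.I * (k : ℂ) * (z : ℂ)))
          * ((1 : ℂ) - Complex.exp (Complex.I * (l : ℂ) * (z : ℂ)))
          * ((1 : ℂ) - Complex.exp (-Complex.I * (m : ℂ) * (z : ℂ)))
          / (((1 - Real.cos z : ℝ) : ℂ)))
      (nhdsWithin 0 (Set.Ioi 0))
      (nhds ((2 * Real.pi * (((k : ℤ) + (l : ℤ) - |(l : ℤ) - (m : ℤ)| - |(k : ℤ) - (m : ℤ)| : ℤ) : ℝ) : ℝ) : ℂ)) := by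
  have hpi := Real.pi_pos
  set g : ℝ → ℂ := fun z => ∑ a ∈ Finset.range k, ∑ b ∈ Finset.range m,
      (2 * Complex.exp (Complex.I * (((a:ℤ) - (b:ℤ) : ℤ) : ℂ) * z)
        - 2 * Complex.exp (Complex.I * (((a:ℤ) + (l:ℤ) - (b:ℤ) : ℤ) : ℂ) * z)) with hg
  have hgc : Continuous g := by rw [hg]; fun_prop
  set F : ℝ → ℂ := fun t => ∫ z in (0:ℝ)..t, g z with hF
  have hFc : Continuous F := by
    rw [hF]
    exact intervalIntegral.continuous_primitive (fun a b => hgc.intervalIntegrable a b) 0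
  -- value of the full integral
  have hval : F (2 * Real.pi) - F 0
      = ((2 * Real.pi * (((k : ℤ) + (l : ℤ) - |(l : ℤ) - (m : ℤ)| - |(k : ℤ) - (m : ℤ)| : ℤ) : ℝ) : ℝ) : ℂ) := by
    have h0 : F 0 = 0 := intervalIntegral.integral_same
    rw [h0, sub_zero, hF]
    show (∫ z in (0:ℝ)..(2*Real.pi), g z) = _
    rw [hg]
    rw [aux_val k l m]
    have hz : 2 * ((min k m : ℕ) : ℤ) - 2 * ((min k (m - l) : ℕ) : ℤ)
        = (k:ℤ) + (l:ℤ) - |(l:ℤ) - (m:ℤ)| - |(k:ℤ) - (m:ℤ)| := by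
      rcases abs_cases ((l:ℤ) - (m:ℤ)) with ⟨h1, h2⟩ | ⟨h1, h2⟩ <;>
        rcases abs_cases ((k:ℤ) - (m:ℤ)) with ⟨h3, h4⟩ | ⟨h3, h4⟩ <;> omega
    have hr : 2 * ((min k m : ℕ) : ℝ) * (2 * Real.pi) - 2 * ((min k (m - l) : ℕ) : ℝ) * (2 * Real.pi)
        = 2 * Real.pi * (((k : ℤ) + (l : ℤ) - |(l : ℤ) - (m : ℤ)| - |(k : ℤ) - (m : ℤ)| : ℤ) : ℝ) := by
      have hc := congrArg (fun n : ℤ => (n : ℝ)) hz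
      push_cast at hc ⊢
      linear_combination (2 * Real.pi) * hc
    rw [show (2 * ((min k m : ℕ) : ℂ) * ((2*Real.pi : ℝ) : ℂ)
          - 2 * ((min k (m - l) : ℕ) : ℂ) * ((2*Real.pi : ℝ) : ℂ))
        = ((2 * ((min k m : ℕ) : ℝ) * (2 * Real.pi)
            - 2 * ((min k (m - l) : ℕ) : ℝ) * (2 * Real.pi) : ℝ) : ℂ) from by push_cast [-Nat.cast_min]; ring]
    exact congrArg Complex.ofReal hr
  -- the limit of F (2π - ε) - F ε
  have hlim : Tendsto (fun ε : ℝ => F (2 * Real.pi - ε) - F ε) (nhdsWithin 0 (Set.Ioi 0))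
      (nhds (F (2 * Real.pi) - F 0)) := by
    apply Filter.Tendsto.sub
    · have h1 : Tendsto (fun ε : ℝ => 2 * Real.pi - ε) (nhdsWithin 0 (Set.Ioi 0)) (nhds (2 * Real.pi)) := by
        have : Tendsto (fun ε : ℝ => 2 * Real.pi - ε) (nhds 0) (nhds (2 * Real.pi - 0)) :=
          tendsto_const_nhds.sub tendsto_id
        rw [sub_zero] at this
        exact this.mono_left nhdsWithin_le_nhds
      exact (hFc.tendsto _).comp h1
    · exact (hFc.tendsto 0).mono_left nhdsWithin_le_nhds
  rw [hval] at hlim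
  apply hlim.congr'
  filter_upwards [Ioo_mem_nhdsGT_of_mem (Set.left_mem_Ico.mpr hpi)] with ε hε
  obtain ⟨hε0, hεπ⟩ := hε
  have hle : ε ≤ 2 * Real.pi - ε := by linarith
  have heq : F (2 * Real.pi - ε) - F ε = ∫ z in ε..(2 * Real.pi - ε), g z :=
    intervalIntegral.integral_interval_sub_left (hgc.intervalIntegrable _ _) (hgc.intervalIntegrable _ _)
  rw [heq]
  apply intervalIntegral.integral_congr
  intro z hz
  rw [Set.uIcc_of_le hle] at hz
  obtain ⟨hz1, hz2⟩ := hz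
  have hzcos : Real.cos z ≠ 1 := by
    intro hcos
    rcases (Real.cos_eq_one_iff z).mp hcos with ⟨n, hn⟩
    have hz0 : (0:ℝ) < z := lt_of_lt_of_le hε0 hz1
    have hz2π : z < 2 * Real.pi := by linarith
    rcases le_or_gt n 0 with hn0 | hn1
    · have : (n:ℝ) * (2 * Real.pi) ≤ 0 := by
        apply mul_nonpos_of_nonpos_of_nonneg
        · exact_mod_cast Int.cast_nonpos.mpr hn0
        · linarith
      linarith
    · have : (1:ℝ) ≤ (n:ℝ) := by exact_mod_cast hn1
      have : 2 * Real.pi ≤ (n:ℝ) * (2 * Real.pi) := by nlinarith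
      linarith
  exact ((aux_eq k l m hzcos).trans (aux_sum k l m z)).symm
end

section
/- Let k ≥ 1 be an integer and σ ∈ {0,1}. The function u(x) = e^{ikx} satisfies C_σ[u] = (k − σ)·e^{ikx}, where C_σ[u](x) = P₊[(1/(4π)) ∫₀^{2π} |u(x)−u(y)|²(u(x)−u(y))/(1−cos(x−y)) dy − σ|u(x)|² u(x)] and P₊ projects a function on the torus onto its Fourier modes with strictly positive frequency. -/
/-! With `t = x - y` and `a = e^{it}` one has `1 - cos t = (1 - a)(1 - a⁻¹)/2` and
`|e^{ikx} - e^{iky}|² = (1 - a^k)(1 - a^{-k})`, so the integrand equals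
`2 e^{ikx} (∑_{j<k} a^j)(∑_{l<k} a^{-l})(1 - a^{-k})`, a trigonometric polynomial in `t`
(the Fejér kernel times `1 - a^{-k}`). Integrating over a period keeps its constant term `k`,
so the integral is `4πk e^{ikx}`, and `P₊` fixes `e^{ikx}` because `k ≥ 1`. -/

open Complex Finset intervalIntegral

lemma integral_exp_I_int_mul_sub (m : ℤ) (x : ℝ) :
    ∫ y in (0 : ℝ)..2 * Real.pi, cexp (I * m * (x - y)) =
      if m = 0 then (2 * Real.pi : ℂ) else 0 := by
  have hsplit : ∀ y : ℝ, cexp (I * m * (x - y)) = cexp (I * m * x) * cexp (-(I * m) * y) := by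
    intro y; rw [← Complex.exp_add]; ring_nf
  simp_rw [hsplit, integral_const_mul]
  rcases eq_or_ne m 0 with rfl | hm
  · simp
  · have hc : -(I * m) ≠ 0 := by simp [hm]
    have hper : cexp (-(I * m) * (2 * Real.pi : ℝ)) = 1 := by
      rw [← Complex.exp_int_mul_two_pi_mul_I (-m)]; push_cast; ring_nf
    rw [integral_exp_mul_complex hc, hper]
    simp [hm]

lemma one_sub_pow_mul_one_sub_pow_div {K : Type*} [Field K] {a b : K} (ha : a ≠ 1) (hb : b ≠ 1)
    (n : ℕ) :
    (1 - a ^ n) * (1 - b ^ n) / ((1 - a) * (1 - b)) =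
      (∑ j ∈ range n, a ^ j) * ∑ l ∈ range n, b ^ l := by
  rw [← mul_neg_geom_sum a, ← mul_neg_geom_sum b]
  have : 1 - a ≠ 0 := sub_ne_zero.mpr ha.symm
  have : 1 - b ≠ 0 := sub_ne_zero.mpr hb.symm
  field_simp

lemma ofReal_norm_one_sub_sq {w : ℂ} (hw : ‖w‖ = 1) :
    ((‖1 - w‖ : ℝ) : ℂ) ^ 2 = (1 - w) * (1 - w⁻¹) := by
  rw [← mul_conj', inv_eq_conj hw, map_sub, map_one]

lemma ofReal_one_sub_cos (t : ℝ) :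
    ((1 - Real.cos t : ℝ) : ℂ) = (1 - cexp (I * t)) * (1 - (cexp (I * t))⁻¹) / 2 := by
  have ha : cexp (I * t) ≠ 0 := Complex.exp_ne_zero _
  rw [ofReal_sub, ofReal_one, ofReal_cos, Complex.cos, neg_mul,
    mul_comm (t : ℂ) I, Complex.exp_neg]
  field_simp
  ring

lemma norm_exp_I_mul_natCast_mul (k : ℕ) (x : ℝ) : ‖cexp (I * k * x)‖ = 1 := by
  simp [Complex.norm_exp]

lemma cubic_integrand_exp_eq_sum (k : ℕ) (x y : ℝ) :
    ((‖cexp (I * k * x) - cexp (I * k * y)‖ : ℝ) : ℂ) ^ 2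
        * (cexp (I * k * x) - cexp (I * k * y)) / ((1 - Real.cos (x - y) : ℝ) : ℂ)
      = 2 * cexp (I * k * x) * ∑ j ∈ range k, ∑ l ∈ range k,
          (cexp (I * ((j - l : ℤ) : ℂ) * (x - y))
            - cexp (I * ((j - l - k : ℤ) : ℂ) * (x - y))) := by
  set a := cexp (I * (x - y)) with ha_def
  have ha : a ≠ 0 := Complex.exp_ne_zero _
  have ha_norm : ‖a‖ = 1 := by rw [ha_def, ← ofReal_sub]; exact norm_exp_I_mul_ofReal _
  have hky : cexp (I * k * y) = cexp (I * k * x) * a⁻¹ ^ k := by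
    rw [← Complex.exp_neg, ← Complex.exp_nat_mul, ← Complex.exp_add]
    ring_nf
  have hnorm : ((‖cexp (I * k * x) - cexp (I * k * y)‖ : ℝ) : ℂ) ^ 2 =
      (1 - a⁻¹ ^ k) * (1 - a ^ k) := by
    rw [hky, ← mul_one_sub, norm_mul, norm_exp_I_mul_natCast_mul, one_mul,
      ofReal_norm_one_sub_sq (by rw [norm_pow, norm_inv, ha_norm]; simp), inv_pow, inv_inv]
  have hterm : ∀ m : ℤ, cexp (I * m * (x - y)) = a ^ m := by
    intro m
    rw [ha_def, ← Complex.exp_int_mul]; ring_nf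
  have hsum : ∑ j ∈ range k, ∑ l ∈ range k,
      (cexp (I * ((j - l : ℤ) : ℂ) * (x - y)) - cexp (I * ((j - l - k : ℤ) : ℂ) * (x - y)))
        = (∑ j ∈ range k, a ^ j) * (∑ l ∈ range k, a⁻¹ ^ l) * (1 - a⁻¹ ^ k) := by
    simp_rw [hterm, zpow_sub₀ ha, zpow_natCast, sum_mul_sum, sum_mul, mul_sub, mul_one,
      div_eq_mul_inv, inv_pow]
  rw [hnorm, hky, ofReal_one_sub_cos, ofReal_sub, ← ha_def, hsum]
  rcases eq_or_ne a 1 with h1 | h1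
  -- at `x - y ∈ 2πℤ` both sides vanish, the left one through `_ / 0 = 0`
  · simp [h1]
  · have hinv1 : a⁻¹ ≠ 1 := inv_ne_one.mpr h1
    rw [← one_sub_pow_mul_one_sub_pow_div h1 hinv1 k]
    have : 1 - a ≠ 0 := sub_ne_zero.mpr h1.symm
    have : 1 - a⁻¹ ≠ 0 := sub_ne_zero.mpr hinv1.symm
    field_simp

lemma integral_cubic_integrand_exp (k : ℕ) (x : ℝ) :
    ∫ y in (0 : ℝ)..2 * Real.pi,
        ((‖cexp (I * k * x) - cexp (I * k * y)‖ : ℝ) : ℂ) ^ 2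
          * (cexp (I * k * x) - cexp (I * k * y)) / ((1 - Real.cos (x - y) : ℝ) : ℂ)
      = 4 * Real.pi * k * cexp (I * k * x) := by
  have hint : ∀ m : ℤ, IntervalIntegrable (fun y : ℝ => cexp (I * m * (x - y)))
      MeasureTheory.volume 0 (2 * Real.pi) :=
    fun m => (by fun_prop : Continuous _).intervalIntegrable _ _
  have hmode : ∀ j ∈ range k, ∀ l ∈ range k,
      ∫ y in (0 : ℝ)..2 * Real.pi,
          (cexp (I * ((j - l : ℤ) : ℂ) * (x - y))
            - cexp (I * ((j - l - k : ℤ) : ℂ) * (x - y))) =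
        if j = l then (2 * Real.pi : ℂ) else 0 := by
    intro j hj l hl
    rw [mem_range] at hj hl
    have hjlk : (j - l - k : ℤ) ≠ 0 := by omega
    rw [integral_sub (hint _) (hint _), integral_exp_I_int_mul_sub, integral_exp_I_int_mul_sub,
      if_neg hjlk, sub_zero]
    simp only [sub_eq_zero, Nat.cast_inj]
  simp_rw [cubic_integrand_exp_eq_sum]
  rw [integral_const_mul,
    integral_finsetSum fun j _ => (by fun_prop : Continuous _).intervalIntegrable _ _]
  rw [sum_congr rfl fun j hj => (integral_finsetSum fun l _ => (hint _).sub (hint _)).trans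
    ((sum_congr rfl (hmode j hj)).trans (by rw [sum_ite_eq, if_pos hj])), sum_const, card_range,
    nsmul_eq_mul]
  ring

theorem stmt_7_general (k : ℕ) (hk : 1 ≤ k) (σ : ℕ)
    (Pplus : (ℝ → ℂ) →ₗ[ℂ] (ℝ → ℂ))
    (hP : ∀ j : ℤ, 1 ≤ j →
      Pplus (fun x : ℝ => Complex.exp (Complex.I * (j : ℂ) * (x : ℂ)))
        = fun x : ℝ => Complex.exp (Complex.I * (j : ℂ) * (x : ℂ))) :
    Pplus (fun x : ℝ =>
        (1 / (4 * (Real.pi : ℂ))) *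
          (∫ y in (0 : ℝ)..(2 * Real.pi),
            ((‖(Complex.exp (Complex.I * (k : ℂ) * (x : ℂ))
                - Complex.exp (Complex.I * (k : ℂ) * (y : ℂ)))‖ : ℝ) : ℂ) ^ 2
              * (Complex.exp (Complex.I * (k : ℂ) * (x : ℂ))
                - Complex.exp (Complex.I * (k : ℂ) * (y : ℂ)))
              / (((1 - Real.cos (x - y) : ℝ) : ℂ)))
        - (σ : ℂ) * ((‖(Complex.exp (Complex.I * (k : ℂ) * (x : ℂ)))‖ : ℝ) : ℂ) ^ 2
            * Complex.exp (Complex.I * (k : ℂ) * (x : ℂ)))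
      = fun x : ℝ => ((k : ℂ) - (σ : ℂ)) * Complex.exp (Complex.I * (k : ℂ) * (x : ℂ)) := by
  have hπ : (Real.pi : ℂ) ≠ 0 := ofReal_ne_zero.mpr Real.pi_ne_zero
  calc _ = Pplus (((k : ℂ) - σ) • fun x : ℝ => cexp (I * ((k : ℤ) : ℂ) * x)) := by
        congr 1
        funext x
        rw [integral_cubic_integrand_exp, norm_exp_I_mul_natCast_mul, ofReal_one, one_pow, mul_one]
        simp only [Pi.smul_apply, smul_eq_mul, Int.cast_natCast]
        field_simp
    _ = _ := by
        rw [map_smul, hP k (mod_cast hk)]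
        rfl

/-- For `u(x) = e^{ikx}` with `k ≥ 1` and `σ ∈ {0,1}`,
`C_σ[u] = (k - σ) e^{ikx}`, where
`C_σ[u] = P₊[(1/(4π)) ∫₀^{2π} |u(x)-u(y)|²(u(x)-u(y))/(1-cos(x-y)) dy - σ|u(x)|²u(x)]`
and `P₊` is (any linear map acting as) the projection onto strictly positive
Fourier modes, in particular fixing `x ↦ e^{ijx}` for `j ≥ 1`. -/
theorem stmt_7 (k : ℕ) (hk : 1 ≤ k) (σ : ℕ) (hσ : σ = 0 ∨ σ = 1)
    (Pplus : (ℝ → ℂ) →ₗ[ℂ] (ℝ → ℂ))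
    (hP : ∀ j : ℤ, 1 ≤ j →
      Pplus (fun x : ℝ => Complex.exp (Complex.I * (j : ℂ) * (x : ℂ)))
        = fun x : ℝ => Complex.exp (Complex.I * (j : ℂ) * (x : ℂ))) :
    Pplus (fun x : ℝ =>
        (1 / (4 * (Real.pi : ℂ))) *
          (∫ y in (0 : ℝ)..(2 * Real.pi),
            ((‖(Complex.exp (Complex.I * (k : ℂ) * (x : ℂ))
                - Complex.exp (Complex.I * (k : ℂ) * (y : ℂ)))‖ : ℝ) : ℂ) ^ 2
              * (Complex.exp (Complex.I * (k : ℂ) * (x : ℂ))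
                - Complex.exp (Complex.I * (k : ℂ) * (y : ℂ)))
              / (((1 - Real.cos (x - y) : ℝ) : ℂ)))
        - (σ : ℂ) * ((‖(Complex.exp (Complex.I * (k : ℂ) * (x : ℂ)))‖ : ℝ) : ℂ) ^ 2
            * Complex.exp (Complex.I * (k : ℂ) * (x : ℂ)))
      = fun x : ℝ => ((k : ℂ) - (σ : ℂ)) * Complex.exp (Complex.I * (k : ℂ) * (x : ℂ)) :=
  stmt_7_general k hk σ Pplus hP
end

section
/- Let (a_k)_{k≥1} be a finitely supported family of complex numbers, σ ∈ {0,1}, and define E_σ = ∑ over quadruples (k,ℓ,m,p) of positive integers with k+ℓ = m+p of (min(k,ℓ,m,p) − σ) · a_k a_ℓ conj(a_m) conj(a_p). Then E_0 is a nonnegative real number, i.e. E_0 ≥ 0. -/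
open Finset Complex

/-- The summand of the energy. -/
noncomputable def E9F (a : ℕ → ℂ) (q : ℕ × ℕ × ℕ × ℕ) : ℂ :=
  if q.1 + q.2.1 = q.2.2.1 + q.2.2.2 ∧ 1 ≤ q.1 ∧ 1 ≤ q.2.1 ∧ 1 ≤ q.2.2.1 ∧ 1 ≤ q.2.2.2 then
    ((min (min q.1 q.2.1) (min q.2.2.1 q.2.2.2) : ℕ) : ℂ)
      * a q.1 * a q.2.1 * (starRingEnd ℂ) (a q.2.2.1) * (starRingEnd ℂ) (a q.2.2.2)
  else 0

/-- `b j s = ∑_{k+l=s, k,l ≥ j} a_k a_l` (cut off at `N`). -/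
noncomputable def E9b (a : ℕ → ℂ) (N j s : ℕ) : ℂ :=
  ∑ k ∈ Finset.range N, ∑ l ∈ Finset.range N,
    if j ≤ k ∧ j ≤ l ∧ k + l = s then a k * a l else 0

/-- The split summand. -/
noncomputable def E9G (a : ℕ → ℂ) (w : ℕ × ℕ) (q : ℕ × ℕ × ℕ × ℕ) : ℂ :=
  (if 1 ≤ w.1 ∧ w.1 ≤ q.1 ∧ w.1 ≤ q.2.1 ∧ q.1 + q.2.1 = w.2 then a q.1 * a q.2.1 else 0) *
  (if w.1 ≤ q.2.2.1 ∧ w.1 ≤ q.2.2.2 ∧ q.2.2.1 + q.2.2.2 = w.2 then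
      (starRingEnd ℂ) (a q.2.2.1) * (starRingEnd ℂ) (a q.2.2.2) else 0)

lemma E9_ite_mul_ite (P Q : Prop) [Decidable P] [Decidable Q] (x y : ℂ) :
    (if P then x else 0) * (if Q then y else 0) = if P ∧ Q then x * y else 0 := by
  split_ifs <;> simp_all

/-- Per-point identity. -/
lemma E9_pointwise (a : ℕ → ℂ) (N : ℕ) (q : ℕ × ℕ × ℕ × ℕ)
    (hq : q ∈ Finset.range N ×ˢ Finset.range N ×ˢ Finset.range N ×ˢ Finset.range N) :
    E9F a q = ∑ w ∈ Finset.range N ×ˢ Finset.range (2 * N), E9G a w q := by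
  obtain ⟨k, l, m, p⟩ := q
  simp only [Finset.mem_product, Finset.mem_range] at hq
  obtain ⟨hk, hl, hm, hp⟩ := hq
  rw [Finset.sum_product]
  simp only [E9G, E9_ite_mul_ite]
  by_cases hc : k + l = m + p ∧ 1 ≤ k ∧ 1 ≤ l ∧ 1 ≤ m ∧ 1 ≤ p
  · set X : ℂ := (a k * a l) * ((starRingEnd ℂ) (a m) * (starRingEnd ℂ) (a p)) with hX
    set M : ℕ := min (min k l) (min m p) with hM
    have hstep : ∀ j ∈ Finset.range N,
        (∑ s ∈ Finset.range (2 * N),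
          if (1 ≤ j ∧ j ≤ k ∧ j ≤ l ∧ k + l = s) ∧ (j ≤ m ∧ j ≤ p ∧ m + p = s) then X else 0)
        = if j ∈ Finset.Icc 1 M then X else 0 := by
      intro j _
      have hiff : ((1 ≤ j ∧ j ≤ k ∧ j ≤ l ∧ k + l = k + l) ∧ (j ≤ m ∧ j ≤ p ∧ m + p = k + l))
          ↔ j ∈ Finset.Icc 1 M := by
        simp only [Finset.mem_Icc, hM]
        constructor
        · rintro ⟨⟨h1, h2, h3, -⟩, h4, h5, -⟩
          exact ⟨h1, le_min (le_min h2 h3) (le_min h4 h5)⟩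
        · rintro ⟨h1, h2⟩
          simp only [le_min_iff] at h2
          exact ⟨⟨h1, h2.1.1, h2.1.2, trivial⟩, h2.2.1, h2.2.2, hc.1.symm⟩
      rw [Finset.sum_eq_single (k + l)]
      · exact if_congr hiff rfl rfl
      · intro s _ hne
        exact if_neg (by omega)
      · intro h
        exact absurd (Finset.mem_range.mpr (by omega)) h
    rw [Finset.sum_congr rfl hstep, Finset.sum_ite_mem,
      Finset.inter_eq_right.mpr (fun j hj => Finset.mem_range.mpr (by
        simp only [Finset.mem_Icc, hM] at hj; omega)),
      Finset.sum_const, Nat.card_Icc]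
    unfold E9F
    rw [if_pos (by exact hc)]
    simp only [hX, hM, nsmul_eq_mul]
    push_cast [Nat.add_sub_cancel]
    ring
  · rw [show E9F a (k, l, m, p) = 0 from if_neg (by exact hc)]
    refine (Finset.sum_eq_zero fun j _ => Finset.sum_eq_zero fun s _ => ?_).symm
    exact if_neg (by intro h; exact hc (by omega))

/-- Factorization for fixed `(j,s)`. -/
lemma E9_factor (a : ℕ → ℂ) (N : ℕ) (w : ℕ × ℕ) :
    ∑ q ∈ Finset.range N ×ˢ Finset.range N ×ˢ Finset.range N ×ˢ Finset.range N, E9G a w q =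
      if 1 ≤ w.1 then (Complex.normSq (E9b a N w.1 w.2) : ℂ) else 0 := by
  obtain ⟨j, s⟩ := w
  simp only [E9G, Finset.sum_product]
  simp only [← Finset.mul_sum, ← Finset.sum_mul]
  have hg : (∑ m ∈ Finset.range N, ∑ p ∈ Finset.range N,
      if j ≤ m ∧ j ≤ p ∧ m + p = s then (starRingEnd ℂ) (a m) * (starRingEnd ℂ) (a p) else 0)
      = (starRingEnd ℂ) (E9b a N j s) := by
    simp [E9b, map_sum, apply_ite (starRingEnd ℂ)]
  by_cases hj : 1 ≤ j
  · have hf : (∑ k ∈ Finset.range N, ∑ l ∈ Finset.range N,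
        if 1 ≤ j ∧ j ≤ k ∧ j ≤ l ∧ k + l = s then a k * a l else 0) = E9b a N j s := by
      simp [E9b, hj]
    rw [hf, hg, Complex.mul_conj, if_pos hj]
  · simp [hj]

/-- The Fourier-space energy `E₀ = ∑_{k+ℓ=m+p, k,ℓ,m,p≥1} min(k,ℓ,m,p) a_k a_ℓ ā_m ā_p`
of a finitely supported family `(a_k)_{k≥1}` is a nonnegative real number. -/
theorem stmt_9 (a : ℕ → ℂ) (ha0 : a 0 = 0) (hfin : (Function.support a).Finite) :
    ((∑' q : ℕ × ℕ × ℕ × ℕ,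
        if q.1 + q.2.1 = q.2.2.1 + q.2.2.2 ∧ 1 ≤ q.1 ∧ 1 ≤ q.2.1 ∧ 1 ≤ q.2.2.1 ∧ 1 ≤ q.2.2.2 then
          ((min (min q.1 q.2.1) (min q.2.2.1 q.2.2.2) : ℕ) : ℂ)
            * a q.1 * a q.2.1 * (starRingEnd ℂ) (a q.2.2.1) * (starRingEnd ℂ) (a q.2.2.2)
        else 0).im = 0)
    ∧ 0 ≤ (∑' q : ℕ × ℕ × ℕ × ℕ,
        if q.1 + q.2.1 = q.2.2.1 + q.2.2.2 ∧ 1 ≤ q.1 ∧ 1 ≤ q.2.1 ∧ 1 ≤ q.2.2.1 ∧ 1 ≤ q.2.2.2 then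
          ((min (min q.1 q.2.1) (min q.2.2.1 q.2.2.2) : ℕ) : ℂ)
            * a q.1 * a q.2.1 * (starRingEnd ℂ) (a q.2.2.1) * (starRingEnd ℂ) (a q.2.2.2)
        else 0).re := by
  set N : ℕ := hfin.toFinset.sup id + 1 with hN
  have hNa : ∀ k, a k ≠ 0 → k < N := by
    intro k hk
    have : k ∈ hfin.toFinset := by simpa [Function.mem_support] using hk
    have := Finset.le_sup (f := id) this
    simp only [id] at this
    omega
  set T : Finset (ℕ × ℕ × ℕ × ℕ) :=
    Finset.range N ×ˢ Finset.range N ×ˢ Finset.range N ×ˢ Finset.range N with hT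
  have hsum : (∑' q : ℕ × ℕ × ℕ × ℕ,
        if q.1 + q.2.1 = q.2.2.1 + q.2.2.2 ∧ 1 ≤ q.1 ∧ 1 ≤ q.2.1 ∧ 1 ≤ q.2.2.1 ∧ 1 ≤ q.2.2.2 then
          ((min (min q.1 q.2.1) (min q.2.2.1 q.2.2.2) : ℕ) : ℂ)
            * a q.1 * a q.2.1 * (starRingEnd ℂ) (a q.2.2.1) * (starRingEnd ℂ) (a q.2.2.2)
        else 0) =
      ((∑ w ∈ Finset.range N ×ˢ Finset.range (2 * N),
          if 1 ≤ w.1 then Complex.normSq (E9b a N w.1 w.2) else 0 : ℝ) : ℂ) := by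
    have h1 : (∑' q : ℕ × ℕ × ℕ × ℕ, E9F a q) = ∑ q ∈ T, E9F a q := by
      apply tsum_eq_sum
      intro q hq
      have h4 : ¬ q.1 < N ∨ ¬ q.2.1 < N ∨ ¬ q.2.2.1 < N ∨ ¬ q.2.2.2 < N := by
        by_contra h
        push_neg at h
        exact hq (by simp [hT, Finset.mem_product, Finset.mem_range]; tauto)
      have hz : a q.1 = 0 ∨ a q.2.1 = 0 ∨ a q.2.2.1 = 0 ∨ a q.2.2.2 = 0 := by
        rcases h4 with h | h | h | h
        · exact Or.inl (by by_contra h0; exact h (hNa _ h0))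
        · exact Or.inr (Or.inl (by by_contra h0; exact h (hNa _ h0)))
        · exact Or.inr (Or.inr (Or.inl (by by_contra h0; exact h (hNa _ h0))))
        · exact Or.inr (Or.inr (Or.inr (by by_contra h0; exact h (hNa _ h0))))
      unfold E9F
      rcases hz with h | h | h | h <;> simp [h]
    calc (∑' q : ℕ × ℕ × ℕ × ℕ, E9F a q) = ∑ q ∈ T, E9F a q := h1
      _ = ∑ q ∈ T, ∑ w ∈ Finset.range N ×ˢ Finset.range (2 * N), E9G a w q :=
          Finset.sum_congr rfl fun q hq => E9_pointwise a N q hq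
      _ = ∑ w ∈ Finset.range N ×ˢ Finset.range (2 * N), ∑ q ∈ T, E9G a w q :=
          Finset.sum_comm
      _ = ∑ w ∈ Finset.range N ×ˢ Finset.range (2 * N),
            (if 1 ≤ w.1 then (Complex.normSq (E9b a N w.1 w.2) : ℂ) else 0) :=
          Finset.sum_congr rfl fun w _ => E9_factor a N w
      _ = _ := by push_cast [apply_ite (Complex.ofReal)]; rfl
  rw [show (fun q : ℕ × ℕ × ℕ × ℕ =>
        if q.1 + q.2.1 = q.2.2.1 + q.2.2.2 ∧ 1 ≤ q.1 ∧ 1 ≤ q.2.1 ∧ 1 ≤ q.2.2.1 ∧ 1 ≤ q.2.2.2 then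
          ((min (min q.1 q.2.1) (min q.2.2.1 q.2.2.2) : ℕ) : ℂ)
            * a q.1 * a q.2.1 * (starRingEnd ℂ) (a q.2.2.1) * (starRingEnd ℂ) (a q.2.2.2)
        else 0) = E9F a from rfl] at hsum ⊢
  rw [hsum]
  constructor
  · simp
  · rw [Complex.ofReal_re]
    apply Finset.sum_nonneg
    intro w _
    split_ifs
    · exact Complex.normSq_nonneg _
    · exact le_rfl
end

section
/- Let (a_k)_{k≥1} be a finitely supported family of complex numbers and define E_σ = ∑_{k+ℓ=m+p, k,ℓ,m,p≥1} (min(k,ℓ,m,p) − σ) a_k a_ℓ conj(a_m) conj(a_p). Then E_1 ≥ 0, and E_1 = 0 if and only if a_k = 0 for all k ≥ 2. -/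
open Finset

noncomputable def Ff (a : ℕ → ℂ) (q : ℕ × ℕ × ℕ × ℕ) : ℂ :=
  if q.1 + q.2.1 = q.2.2.1 + q.2.2.2 ∧ 1 ≤ q.1 ∧ 1 ≤ q.2.1 ∧ 1 ≤ q.2.2.1 ∧ 1 ≤ q.2.2.2 then
    (((min (min q.1 q.2.1) (min q.2.2.1 q.2.2.2) : ℕ) : ℂ) - 1)
      * a q.1 * a q.2.1 * (starRingEnd ℂ) (a q.2.2.1) * (starRingEnd ℂ) (a q.2.2.2)
  else 0

noncomputable def Bb (a : ℕ → ℂ) (N n j : ℕ) : ℂ :=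
  ∑ k ∈ range N, ∑ l ∈ range N, if k + l = n ∧ j ≤ k ∧ j ≤ l then a k * a l else 0

noncomputable def Gg (a : ℕ → ℂ) (j k l m p : ℕ) : ℂ :=
  if k + l = m + p ∧ j ≤ k ∧ j ≤ l ∧ j ≤ m ∧ j ≤ p then
    (a k * a l) * ((starRingEnd ℂ) (a m) * (starRingEnd ℂ) (a p)) else 0

lemma swap3 (s t u : Finset ℕ) (f : ℕ → ℕ → ℕ → ℂ) :
    ∑ x ∈ s, ∑ y ∈ t, ∑ n ∈ u, f x y n = ∑ n ∈ u, ∑ x ∈ s, ∑ y ∈ t, f x y n := by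
  calc ∑ x ∈ s, ∑ y ∈ t, ∑ n ∈ u, f x y n
      = ∑ x ∈ s, ∑ n ∈ u, ∑ y ∈ t, f x y n :=
        Finset.sum_congr rfl fun x _ => Finset.sum_comm
    _ = _ := Finset.sum_comm

lemma swap4 (s t u v : Finset ℕ) (f : ℕ → ℕ → ℕ → ℕ → ℂ) :
    ∑ x ∈ s, ∑ y ∈ t, ∑ z ∈ u, ∑ n ∈ v, f x y z n
      = ∑ n ∈ v, ∑ x ∈ s, ∑ y ∈ t, ∑ z ∈ u, f x y z n := by
  calc ∑ x ∈ s, ∑ y ∈ t, ∑ z ∈ u, ∑ n ∈ v, f x y z n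
      = ∑ x ∈ s, ∑ n ∈ v, ∑ y ∈ t, ∑ z ∈ u, f x y z n :=
        Finset.sum_congr rfl fun x _ => swap3 _ _ _ _
    _ = _ := Finset.sum_comm

lemma swap5 (s t u v w : Finset ℕ) (f : ℕ → ℕ → ℕ → ℕ → ℕ → ℂ) :
    ∑ x ∈ s, ∑ y ∈ t, ∑ z ∈ u, ∑ r ∈ v, ∑ n ∈ w, f x y z r n
      = ∑ n ∈ w, ∑ x ∈ s, ∑ y ∈ t, ∑ z ∈ u, ∑ r ∈ v, f x y z r n := by
  calc ∑ x ∈ s, ∑ y ∈ t, ∑ z ∈ u, ∑ r ∈ v, ∑ n ∈ w, f x y z r n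
      = ∑ x ∈ s, ∑ n ∈ w, ∑ y ∈ t, ∑ z ∈ u, ∑ r ∈ v, f x y z r n :=
        Finset.sum_congr rfl fun x _ => swap4 _ _ _ _ _
    _ = _ := Finset.sum_comm

lemma coeff_eq (M N : ℕ) (h1 : 1 ≤ M) (h2 : M ≤ N) :
    ∑ j ∈ Icc 2 N, (if j ≤ M then (1 : ℂ) else 0) = (M : ℂ) - 1 := by
  rw [Finset.sum_boole]
  have : (Icc 2 N).filter (fun j => j ≤ M) = Icc 2 M := by
    ext j; simp [Finset.mem_Icc, Finset.mem_filter]; omega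
  rw [this, Nat.card_Icc]
  have : M + 1 - 2 = M - 1 := by omega
  rw [this]
  push_cast [h1]
  ring

lemma Ff_eq (a : ℕ → ℂ) (N : ℕ) {k l m p : ℕ} (hk : k < N) :
    Ff a (k, l, m, p) = ∑ j ∈ Icc 2 N, Gg a j k l m p := by
  by_cases h : k + l = m + p ∧ 1 ≤ k ∧ 1 ≤ l ∧ 1 ≤ m ∧ 1 ≤ p
  · set M := min (min k l) (min m p) with hM
    have hM1 : 1 ≤ M := by simp [hM]; omega
    have hMN : M ≤ N := le_trans (le_trans (min_le_left _ _) (min_le_left _ _)) hk.le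
    have hG : ∀ j ∈ Icc 2 N, Gg a j k l m p
        = (if j ≤ M then (1:ℂ) else 0) * ((a k * a l) * ((starRingEnd ℂ) (a m) * (starRingEnd ℂ) (a p))) := by
      intro j hj
      rw [Gg, ite_mul, one_mul, zero_mul]
      congr 1
      simp only [eq_iff_iff, hM, le_min_iff]
      constructor
      · rintro ⟨-, h2⟩; tauto
      · rintro ⟨⟨h2, h3⟩, h4, h5⟩; exact ⟨h.1, h2, h3, h4, h5⟩
    rw [Finset.sum_congr rfl hG, ← Finset.sum_mul, coeff_eq M N hM1 hMN, Ff, if_pos h]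
    ring
  · rw [Ff, if_neg h]
    refine (Finset.sum_eq_zero fun j hj => ?_).symm
    rw [Gg, if_neg]
    rintro ⟨h1, h2, h3, h4, h5⟩
    have hj2 : 2 ≤ j := (Finset.mem_Icc.mp hj).1
    exact h ⟨h1, by omega, by omega, by omega, by omega⟩

lemma Gg_eq (a : ℕ → ℂ) (N : ℕ) {k l : ℕ} (hk : k < N) (hl : l < N) (m p j : ℕ) :
    Gg a j k l m p = ∑ n ∈ range (2 * N),
      (if k + l = n ∧ j ≤ k ∧ j ≤ l then a k * a l else 0) *
      (if m + p = n ∧ j ≤ m ∧ j ≤ p then (starRingEnd ℂ) (a m) * (starRingEnd ℂ) (a p) else 0) := by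
  have hstep : ∀ n : ℕ,
      (if k + l = n ∧ j ≤ k ∧ j ≤ l then a k * a l else 0) *
      (if m + p = n ∧ j ≤ m ∧ j ≤ p then (starRingEnd ℂ) (a m) * (starRingEnd ℂ) (a p) else 0)
      = if n = k + l then Gg a j k l m p else 0 := by
    intro n
    by_cases hn : n = k + l
    · subst hn
      rw [if_pos rfl, Gg]
      by_cases h1 : k + l = k + l ∧ j ≤ k ∧ j ≤ l
      · by_cases h2 : m + p = k + l ∧ j ≤ m ∧ j ≤ p
        · rw [if_pos h1, if_pos h2, if_pos ⟨h2.1.symm, h1.2.1, h1.2.2, h2.2.1, h2.2.2⟩]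
        · rw [if_neg h2, mul_zero, if_neg]
          rintro ⟨c1, c2, c3, c4, c5⟩; exact h2 ⟨c1.symm, c4, c5⟩
      · rw [if_neg h1, zero_mul, if_neg]
        rintro ⟨c1, c2, c3, c4, c5⟩; exact h1 ⟨rfl, c2, c3⟩
    · rw [if_neg hn,
        if_neg (show ¬(k + l = n ∧ j ≤ k ∧ j ≤ l) from fun h => hn h.1.symm), zero_mul]
  rw [Finset.sum_congr rfl fun n _ => hstep n, Finset.sum_ite_eq' (range (2 * N)) (k + l)]
  rw [if_pos (Finset.mem_range.mpr (by omega))]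

lemma Bmul (a : ℕ → ℂ) (N n j : ℕ) :
    Bb a N n j * (starRingEnd ℂ) (Bb a N n j)
      = ∑ k ∈ range N, ∑ l ∈ range N, ∑ m ∈ range N, ∑ p ∈ range N,
        (if k + l = n ∧ j ≤ k ∧ j ≤ l then a k * a l else 0) *
        (if m + p = n ∧ j ≤ m ∧ j ≤ p then (starRingEnd ℂ) (a m) * (starRingEnd ℂ) (a p) else 0) := by
  have hconj : (starRingEnd ℂ) (Bb a N n j)
      = ∑ m ∈ range N, ∑ p ∈ range N,
        (if m + p = n ∧ j ≤ m ∧ j ≤ p then (starRingEnd ℂ) (a m) * (starRingEnd ℂ) (a p) else 0) := by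
    rw [Bb, map_sum]
    refine Finset.sum_congr rfl fun m _ => ?_
    rw [map_sum]
    refine Finset.sum_congr rfl fun p _ => ?_
    rw [apply_ite (starRingEnd ℂ), map_mul, map_zero]
  rw [hconj, Bb, Finset.sum_mul]
  refine Finset.sum_congr rfl fun k _ => ?_
  rw [Finset.sum_mul]
  refine Finset.sum_congr rfl fun l _ => ?_
  rw [Finset.mul_sum]
  refine Finset.sum_congr rfl fun m _ => ?_
  rw [Finset.mul_sum]

lemma key (a : ℕ → ℂ) (N : ℕ) (hN : ∀ k, N ≤ k → a k = 0) :
    (∑' q : ℕ × ℕ × ℕ × ℕ, Ff a q)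
      = ∑ j ∈ Icc 2 N, ∑ n ∈ range (2 * N), Bb a N n j * (starRingEnd ℂ) (Bb a N n j) := by
  have hsupp : ∀ q ∉ (range N) ×ˢ (range N) ×ˢ (range N) ×ˢ (range N), Ff a q = 0 := by
    rintro ⟨k, l, m, p⟩ hq
    simp only [Finset.mem_product, Finset.mem_range, not_and_or, not_lt] at hq
    rw [Ff]
    split_ifs with h
    · rcases hq with hk | hl | hm | hp
      · simp [hN k hk]
      · simp [hN l hl]
      · simp [hN m hm]
      · simp [hN p hp]
    · rfl
  rw [tsum_eq_sum hsupp]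
  rw [Finset.sum_product, ]
  simp only [Finset.sum_product]
  calc ∑ k ∈ range N, ∑ l ∈ range N, ∑ m ∈ range N, ∑ p ∈ range N, Ff a (k, l, m, p)
      = ∑ k ∈ range N, ∑ l ∈ range N, ∑ m ∈ range N, ∑ p ∈ range N,
          ∑ j ∈ Icc 2 N, Gg a j k l m p := by
        refine Finset.sum_congr rfl fun k hk => ?_
        refine Finset.sum_congr rfl fun l _ => ?_
        refine Finset.sum_congr rfl fun m _ => ?_
        refine Finset.sum_congr rfl fun p _ => ?_
        exact Ff_eq a N (Finset.mem_range.mp hk)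
    _ = ∑ j ∈ Icc 2 N, ∑ k ∈ range N, ∑ l ∈ range N, ∑ m ∈ range N, ∑ p ∈ range N,
          Gg a j k l m p := swap5 _ _ _ _ _ _
    _ = ∑ j ∈ Icc 2 N, ∑ n ∈ range (2 * N), Bb a N n j * (starRingEnd ℂ) (Bb a N n j) := by
        refine Finset.sum_congr rfl fun j _ => ?_
        calc ∑ k ∈ range N, ∑ l ∈ range N, ∑ m ∈ range N, ∑ p ∈ range N, Gg a j k l m p
            = ∑ k ∈ range N, ∑ l ∈ range N, ∑ m ∈ range N, ∑ p ∈ range N,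
                ∑ n ∈ range (2 * N),
                (if k + l = n ∧ j ≤ k ∧ j ≤ l then a k * a l else 0) *
                (if m + p = n ∧ j ≤ m ∧ j ≤ p then (starRingEnd ℂ) (a m) * (starRingEnd ℂ) (a p) else 0) := by
              refine Finset.sum_congr rfl fun k hk => ?_
              refine Finset.sum_congr rfl fun l hl => ?_
              refine Finset.sum_congr rfl fun m _ => ?_
              refine Finset.sum_congr rfl fun p _ => ?_
              exact Gg_eq a N (Finset.mem_range.mp hk) (Finset.mem_range.mp hl) m p j
          _ = ∑ n ∈ range (2 * N), ∑ k ∈ range N, ∑ l ∈ range N, ∑ m ∈ range N, ∑ p ∈ range N,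
                (if k + l = n ∧ j ≤ k ∧ j ≤ l then a k * a l else 0) *
                (if m + p = n ∧ j ≤ m ∧ j ≤ p then (starRingEnd ℂ) (a m) * (starRingEnd ℂ) (a p) else 0) :=
              swap5 _ _ _ _ _ _
          _ = _ := Finset.sum_congr rfl fun n _ => (Bmul a N n j).symm

lemma Bval (a : ℕ → ℂ) (N K : ℕ) (hKN : K < N) :
    Bb a N (2 * K) K = a K * a K := by
  rw [Bb]
  have hpt : ∀ k l : ℕ, (if k + l = 2 * K ∧ K ≤ k ∧ K ≤ l then a k * a l else 0)
      = if k = K then (if l = K then a k * a l else 0) else 0 := by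
    intro k l
    by_cases hc : k + l = 2 * K ∧ K ≤ k ∧ K ≤ l
    · have hk : k = K := by omega
      have hl : l = K := by omega
      rw [if_pos hc, hk, hl, if_pos rfl, if_pos rfl]
    · rw [if_neg hc]
      by_cases h1 : k = K
      · by_cases h2 : l = K
        · exact absurd ⟨by omega, by omega, by omega⟩ hc
        · rw [if_pos h1, if_neg h2]
      · rw [if_neg h1]
  calc ∑ k ∈ range N, ∑ l ∈ range N, (if k + l = 2 * K ∧ K ≤ k ∧ K ≤ l then a k * a l else 0)
      = ∑ k ∈ range N, (if k = K then a K * a K else 0) := by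
        refine Finset.sum_congr rfl fun k _ => ?_
        rw [Finset.sum_congr rfl fun l _ => hpt k l]
        by_cases h1 : k = K
        · rw [Finset.sum_congr rfl fun l (_ : l ∈ range N) => if_pos h1,
            Finset.sum_ite_eq' (range N) K (fun l => a k * a l),
            if_pos (Finset.mem_range.mpr hKN), if_pos h1, h1]
        · rw [Finset.sum_eq_zero fun l _ => if_neg h1, if_neg h1]
    _ = a K * a K := by
        rw [Finset.sum_ite_eq' (range N) K (fun _ => a K * a K),
          if_pos (Finset.mem_range.mpr hKN)]

/-- The Fourier-space energy `E₁ = ∑_{k+ℓ=m+p, k,ℓ,m,p≥1} (min(k,ℓ,m,p)-1) a_k a_ℓ ā_m ā_p`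
of a finitely supported family `(a_k)_{k≥1}` is a nonnegative real number, and it
vanishes if and only if `a_k = 0` for all `k ≥ 2`. -/
theorem stmt_10 (a : ℕ → ℂ) (ha0 : a 0 = 0) (hfin : (Function.support a).Finite) :
    ((∑' q : ℕ × ℕ × ℕ × ℕ,
        if q.1 + q.2.1 = q.2.2.1 + q.2.2.2 ∧ 1 ≤ q.1 ∧ 1 ≤ q.2.1 ∧ 1 ≤ q.2.2.1 ∧ 1 ≤ q.2.2.2 then
          (((min (min q.1 q.2.1) (min q.2.2.1 q.2.2.2) : ℕ) : ℂ) - 1)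
            * a q.1 * a q.2.1 * (starRingEnd ℂ) (a q.2.2.1) * (starRingEnd ℂ) (a q.2.2.2)
        else 0).im = 0)
    ∧ (0 ≤ (∑' q : ℕ × ℕ × ℕ × ℕ,
        if q.1 + q.2.1 = q.2.2.1 + q.2.2.2 ∧ 1 ≤ q.1 ∧ 1 ≤ q.2.1 ∧ 1 ≤ q.2.2.1 ∧ 1 ≤ q.2.2.2 then
          (((min (min q.1 q.2.1) (min q.2.2.1 q.2.2.2) : ℕ) : ℂ) - 1)
            * a q.1 * a q.2.1 * (starRingEnd ℂ) (a q.2.2.1) * (starRingEnd ℂ) (a q.2.2.2)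
        else 0).re)
    ∧ ((∑' q : ℕ × ℕ × ℕ × ℕ,
        if q.1 + q.2.1 = q.2.2.1 + q.2.2.2 ∧ 1 ≤ q.1 ∧ 1 ≤ q.2.1 ∧ 1 ≤ q.2.2.1 ∧ 1 ≤ q.2.2.2 then
          (((min (min q.1 q.2.1) (min q.2.2.1 q.2.2.2) : ℕ) : ℂ) - 1)
            * a q.1 * a q.2.1 * (starRingEnd ℂ) (a q.2.2.1) * (starRingEnd ℂ) (a q.2.2.2)
        else 0) = 0 ↔ ∀ k : ℕ, 2 ≤ k → a k = 0) := by
  classical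
  suffices h : ((∑' q : ℕ × ℕ × ℕ × ℕ, Ff a q).im = 0)
      ∧ (0 ≤ (∑' q : ℕ × ℕ × ℕ × ℕ, Ff a q).re)
      ∧ ((∑' q : ℕ × ℕ × ℕ × ℕ, Ff a q) = 0 ↔ ∀ k : ℕ, 2 ≤ k → a k = 0) by
    exact h
  set N := hfin.toFinset.sup id + 1 with hNdef
  have hN : ∀ k, N ≤ k → a k = 0 := by
    intro k hk
    by_contra h
    have hmem : k ∈ hfin.toFinset := by
      rw [Set.Finite.mem_toFinset, Function.mem_support]; exact h
    have := Finset.le_sup (f := id) hmem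
    simp only [id] at this
    omega
  have hres : (∑' q : ℕ × ℕ × ℕ × ℕ, Ff a q)
      = ((∑ j ∈ Icc 2 N, ∑ n ∈ range (2 * N), Complex.normSq (Bb a N n j) : ℝ) : ℂ) := by
    rw [key a N hN]
    push_cast
    exact Finset.sum_congr rfl fun j _ => Finset.sum_congr rfl fun n _ =>
      (Complex.mul_conj _)
  rw [hres]
  refine ⟨Complex.ofReal_im _, ?_, ?_⟩
  · rw [Complex.ofReal_re]
    exact Finset.sum_nonneg fun j _ => Finset.sum_nonneg fun n _ => Complex.normSq_nonneg _
  · rw [Complex.ofReal_eq_zero]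
    constructor
    · intro hzero k hk2
      by_contra hak
      have hBzero : ∀ j ∈ Icc 2 N, ∀ n ∈ range (2 * N), Complex.normSq (Bb a N n j) = 0 := by
        have h1 := (Finset.sum_eq_zero_iff_of_nonneg
          (fun j _ => Finset.sum_nonneg fun n _ => Complex.normSq_nonneg _)).mp hzero
        intro j hj n hn
        exact (Finset.sum_eq_zero_iff_of_nonneg
          (fun n _ => Complex.normSq_nonneg _)).mp (h1 j hj) n hn
      have hKN : k < N := by
        by_contra h
        exact hak (hN k (by omega))
      have hB := hBzero k (Finset.mem_Icc.mpr ⟨hk2, by omega⟩)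
        (2 * k) (Finset.mem_range.mpr (by omega))
      rw [Bval a N k hKN] at hB
      exact mul_ne_zero hak hak (Complex.normSq_eq_zero.mp hB)
    · intro h
      refine Finset.sum_eq_zero fun j hj => Finset.sum_eq_zero fun n _ => ?_
      have hj2 : 2 ≤ j := (Finset.mem_Icc.mp hj).1
      have hB : Bb a N n j = 0 := by
        rw [Bb]
        refine Finset.sum_eq_zero fun k _ => Finset.sum_eq_zero fun l _ => ?_
        split_ifs with h1
        · rw [h k (by omega), zero_mul]
        · rfl
      rw [hB]
      exact Complex.normSq_zero
end

section
/- Fix N ≥ 1 and σ ∈ {0,1}. For the truncated filamentation ODE d a_p/dt = i p ∑_{k+ℓ−m=p, 1≤k,ℓ,m≤N} (min(k,ℓ,m,p) − σ) a_k a_ℓ conj(a_m) on ℂ^N, the mass M(a) = ∑_{k=1}^N |a_k|²/k is conserved along any solution. -/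
/-!
Writing `S_p` for the cubic sum, the ODE gives `d/dt (|a_p|²/p) = -2 Im (S_p conj a_p)`, so
`dM/dt = -2 Im ∑_p S_p conj a_p`. This quartic sum is real: conjugating it and exchanging the
pairs `(k, ℓ) ↔ (m, p)` maps it to itself, because the resonance condition `k + ℓ = m + p` and the
real coefficient `min(k, ℓ, m, p) - σ` are both invariant under that exchange.
-/

open Finset ComplexConjugate

namespace Complex

theorem im_sum_eq_zero_of_conj_eq_comp {ι : Type*} (s : Finset ι) (f : ι → ℂ) (e : ι → ι)
    (he : ∀ i ∈ s, e i ∈ s) (hee : ∀ i ∈ s, e (e i) = i) (hf : ∀ i ∈ s, conj (f i) = f (e i)) :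
    (∑ i ∈ s, f i).im = 0 := by
  rw [← conj_eq_iff_im, map_sum]
  exact sum_nbij' e e he he hee hee hf

theorem hasDerivAt_norm_sq_div_of_hasDerivAt_I_mul {f : ℝ → ℂ} {w : ℂ} {k t : ℝ} (hk : k ≠ 0)
    (hf : HasDerivAt f (I * k * w) t) :
    HasDerivAt (fun s => ‖f s‖ ^ 2 / k) (-2 * (w * conj (f t)).im) t := by
  refine (hf.norm_sq.div_const k).congr_deriv ?_
  simp only [Complex.inner, mul_re, mul_im, I_re, I_im, ofReal_re, ofReal_im, conj_re, conj_im]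
  field_simp
  ring

end Complex

def resonantCubic (s : Finset ℕ) (c : ℕ → ℕ → ℕ → ℕ → ℂ) (b : ℕ → ℂ) (p : ℕ) : ℂ :=
  ∑ q ∈ s ×ˢ (s ×ˢ s),
    if q.1 + q.2.1 = q.2.2 + p then c q.1 q.2.1 q.2.2 p * b q.1 * b q.2.1 * conj (b q.2.2)
    else 0

theorem im_sum_resonantCubic_mul_conj_eq_zero (s : Finset ℕ) (c : ℕ → ℕ → ℕ → ℕ → ℂ)
    (hc : ∀ k l m p, conj (c k l m p) = c m p k l) (b : ℕ → ℂ) :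
    (∑ p ∈ s, resonantCubic s c b p * conj (b p)).im = 0 := by
  simp only [resonantCubic, sum_mul, ite_mul, zero_mul]
  rw [← sum_product']
  refine Complex.im_sum_eq_zero_of_conj_eq_comp _ _
    (fun x => (x.2.2.1, (x.2.2.2, (x.1, x.2.1)))) ?_ (fun _ _ => rfl) ?_
  · simp only [mem_product]
    tauto
  · rintro ⟨p, k, l, m⟩ -
    simp only [apply_ite conj, map_zero, map_mul, Complex.conj_conj, hc]
    exact if_congr (by omega) (by ring) rfl

theorem stmt_12_general (N : ℕ) (σ : ℕ)
    (a : ℝ → ℕ → ℂ)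
    (hODE : ∀ t : ℝ, ∀ p : ℕ, 1 ≤ p → p ≤ N →
      HasDerivAt (fun s : ℝ => a s p)
        (Complex.I * (p : ℂ) *
          ∑ q ∈ Finset.Icc 1 N ×ˢ (Finset.Icc 1 N ×ˢ Finset.Icc 1 N),
            if q.1 + q.2.1 = q.2.2 + p then
              (((min (min q.1 q.2.1) (min q.2.2 p) : ℕ) : ℂ) - (σ : ℂ))
                * a t q.1 * a t q.2.1 * (starRingEnd ℂ) (a t q.2.2)
            else 0) t) :
    ∀ t s : ℝ,
      ∑ k ∈ Finset.Icc 1 N, ‖a t k‖ ^ 2 / (k : ℝ)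
        = ∑ k ∈ Finset.Icc 1 N, ‖a s k‖ ^ 2 / (k : ℝ) := by
  set c : ℕ → ℕ → ℕ → ℕ → ℂ := fun k l m p => ((min (min k l) (min m p) : ℕ) : ℂ) - σ
  have hc : ∀ k l m p, conj (c k l m p) = c m p k l := fun k l m p => by
    simp only [c, map_sub, map_natCast, min_comm (min k l)]
  have hmass : ∀ t, HasDerivAt (fun s => ∑ k ∈ Icc 1 N, ‖a s k‖ ^ 2 / (k : ℝ)) 0 t := by
    intro t
    have hterm := HasDerivAt.fun_sum fun k (hk : k ∈ Icc 1 N) =>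
      Complex.hasDerivAt_norm_sq_div_of_hasDerivAt_I_mul (w := resonantCubic (Icc 1 N) c (a t) k)
        (Nat.cast_ne_zero.mpr (by grind)) (hODE t k (mem_Icc.mp hk).1 (mem_Icc.mp hk).2)
    rwa [← mul_sum, ← Complex.im_sum,
      im_sum_resonantCubic_mul_conj_eq_zero (Icc 1 N) c hc (a t), mul_zero] at hterm
  exact fun t s => is_const_of_deriv_eq_zero (fun x => (hmass x).differentiableAt)
    (fun x => (hmass x).deriv) t s

/-- The mass `M(a) = ∑_{k=1}^N |a_k|²/k` is conserved along any solution of the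
Galerkin-truncated filamentation equation. -/
theorem stmt_12 (N : ℕ) (hN : 1 ≤ N) (σ : ℕ) (hσ : σ = 0 ∨ σ = 1)
    (a : ℝ → ℕ → ℂ)
    (hODE : ∀ t : ℝ, ∀ p : ℕ, 1 ≤ p → p ≤ N →
      HasDerivAt (fun s : ℝ => a s p)
        (Complex.I * (p : ℂ) *
          ∑ q ∈ Finset.Icc 1 N ×ˢ (Finset.Icc 1 N ×ˢ Finset.Icc 1 N),
            if q.1 + q.2.1 = q.2.2 + p then
              (((min (min q.1 q.2.1) (min q.2.2 p) : ℕ) : ℂ) - (σ : ℂ))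
                * a t q.1 * a t q.2.1 * (starRingEnd ℂ) (a t q.2.2)
            else 0) t) :
    ∀ t s : ℝ,
      ∑ k ∈ Finset.Icc 1 N, ‖a t k‖ ^ 2 / (k : ℝ)
        = ∑ k ∈ Finset.Icc 1 N, ‖a s k‖ ^ 2 / (k : ℝ) :=
  stmt_12_general N σ a hODE
end

section
/- Let (b_p)_{p≥1} be finitely supported complex numbers satisfying, for every p ≥ 1, 0 = ∑_{k+ℓ−m=p, k,ℓ,m≥1} (min(k,ℓ,m,p) − 1) b_k b_ℓ conj(b_m) (the stationary filamentation equation with σ = 1 in Fourier variables). Then b_p = 0 for all p ≥ 2. -/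
open Finset

private lemma coeff_expand' (P k l m p : ℕ) (hk : k ≤ P) (h1k : 1 ≤ k) (h1l : 1 ≤ l)
    (h1m : 1 ≤ m) (h1p : 1 ≤ p) :
    (((min (min k l) (min m p) : ℕ) : ℂ) - 1) =
      ∑ j ∈ Finset.Icc 2 P, if j ≤ k ∧ j ≤ l ∧ j ≤ m ∧ j ≤ p then 1 else 0 := by
  set m0 := min (min k l) (min m p) with hm0
  have hm0le : m0 ≤ P := le_trans (le_trans (min_le_left _ _) (min_le_left _ _)) hk
  have hm01 : 1 ≤ m0 := le_min (le_min h1k h1l) (le_min h1m h1p)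
  have h1 : ∀ j ∈ Finset.Icc 2 P,
      (if j ≤ k ∧ j ≤ l ∧ j ≤ m ∧ j ≤ p then (1:ℂ) else 0) = if j ≤ m0 then 1 else 0 := by
    intro j _
    have : (j ≤ k ∧ j ≤ l ∧ j ≤ m ∧ j ≤ p) ↔ j ≤ m0 := by
      rw [hm0, le_min_iff, le_min_iff, le_min_iff]; tauto
    simp [this]
  rw [Finset.sum_congr rfl h1, Finset.sum_boole]
  have hfilt : (Finset.Icc 2 P).filter (fun j => j ≤ m0) = Finset.Icc 2 m0 := by
    ext j
    simp only [Finset.mem_filter, Finset.mem_Icc]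
    constructor
    · rintro ⟨⟨h2, _⟩, h3⟩; exact ⟨h2, h3⟩
    · rintro ⟨h2, h3⟩; exact ⟨⟨h2, le_trans h3 hm0le⟩, h3⟩
  rw [hfilt, Nat.card_Icc]
  have : m0 + 1 - 2 = m0 - 1 := by omega
  rw [this, Nat.cast_sub hm01, Nat.cast_one]

private lemma sumrot3' {α β γ M : Type*} [AddCommMonoid M] (s : Finset α) (t : Finset β)
    (u : Finset γ) (f : α → β → γ → M) :
    (∑ a ∈ s, ∑ b ∈ t, ∑ c ∈ u, f a b c) = ∑ c ∈ u, ∑ a ∈ s, ∑ b ∈ t, f a b c := by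
  calc (∑ a ∈ s, ∑ b ∈ t, ∑ c ∈ u, f a b c)
      = ∑ a ∈ s, ∑ c ∈ u, ∑ b ∈ t, f a b c :=
        Finset.sum_congr rfl fun a _ => Finset.sum_comm
    _ = ∑ c ∈ u, ∑ a ∈ s, ∑ b ∈ t, f a b c := Finset.sum_comm

private lemma sumrot4' {α β γ δ M : Type*} [AddCommMonoid M] (s : Finset α) (t : Finset β)
    (u : Finset γ) (v : Finset δ) (f : α → β → γ → δ → M) :
    (∑ a ∈ s, ∑ b ∈ t, ∑ c ∈ u, ∑ d ∈ v, f a b c d)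
      = ∑ d ∈ v, ∑ a ∈ s, ∑ b ∈ t, ∑ c ∈ u, f a b c d := by
  calc (∑ a ∈ s, ∑ b ∈ t, ∑ c ∈ u, ∑ d ∈ v, f a b c d)
      = ∑ a ∈ s, ∑ d ∈ v, ∑ b ∈ t, ∑ c ∈ u, f a b c d :=
        Finset.sum_congr rfl fun a _ => sumrot3' t u v (f a)
    _ = ∑ d ∈ v, ∑ a ∈ s, ∑ b ∈ t, ∑ c ∈ u, f a b c d := Finset.sum_comm

private lemma sumrot5' {α β γ δ ε M : Type*} [AddCommMonoid M] (s : Finset α) (t : Finset β)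
    (u : Finset γ) (v : Finset δ) (w : Finset ε) (f : α → β → γ → δ → ε → M) :
    (∑ a ∈ s, ∑ b ∈ t, ∑ c ∈ u, ∑ d ∈ v, ∑ e ∈ w, f a b c d e)
      = ∑ e ∈ w, ∑ a ∈ s, ∑ b ∈ t, ∑ c ∈ u, ∑ d ∈ v, f a b c d e := by
  calc (∑ a ∈ s, ∑ b ∈ t, ∑ c ∈ u, ∑ d ∈ v, ∑ e ∈ w, f a b c d e)
      = ∑ a ∈ s, ∑ e ∈ w, ∑ b ∈ t, ∑ c ∈ u, ∑ d ∈ v, f a b c d e :=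
        Finset.sum_congr rfl fun a _ => sumrot4' t u v w (f a)
    _ = ∑ e ∈ w, ∑ a ∈ s, ∑ b ∈ t, ∑ c ∈ u, ∑ d ∈ v, f a b c d e := Finset.sum_comm

/-- The only stationary solutions of the filamentation equation with `σ = 1` are
supported on the first Fourier mode: if finitely supported `(b_p)_{p≥1}` satisfy
`0 = ∑_{k+ℓ-m=p} (min(k,ℓ,m,p)-1) b_k b_ℓ b̄_m` for all `p ≥ 1`, then `b_p = 0`
for `p ≥ 2`. -/
theorem stmt_17 (b : ℕ → ℂ) (hb0 : b 0 = 0) (hfin : (Function.support b).Finite)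
    (heq : ∀ p : ℕ, 1 ≤ p →
      (0 : ℂ) =
        ∑' q : ℕ × ℕ × ℕ,
          if q.1 + q.2.1 = q.2.2 + p ∧ 1 ≤ q.1 ∧ 1 ≤ q.2.1 ∧ 1 ≤ q.2.2 then
            (((min (min q.1 q.2.1) (min q.2.2 p) : ℕ) : ℂ) - 1)
              * b q.1 * b q.2.1 * (starRingEnd ℂ) (b q.2.2)
          else 0) :
    ∀ p : ℕ, 2 ≤ p → b p = 0 := by
  intro p hp
  by_contra hbp
  have hpmem : p ∈ hfin.toFinset := by simpa [Function.mem_support] using hbp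
  have hsne : hfin.toFinset.Nonempty := ⟨p, hpmem⟩
  set P := hfin.toFinset.max' hsne with hPdef
  have hbP : b P ≠ 0 := by
    simpa [Function.mem_support] using hfin.toFinset.max'_mem hsne
  have hP2 : 2 ≤ P := le_trans hp (hfin.toFinset.le_max' p hpmem)
  have hbound : ∀ n, b n ≠ 0 → n ≤ P := fun n hn =>
    hfin.toFinset.le_max' n (by simpa [Function.mem_support] using hn)
  have hbgt : ∀ n, P < n → b n = 0 := by
    intro n hn
    by_contra h
    exact absurd (hbound n h) (by omega)
  set R := Finset.range (P+1) with hRdef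
  -- finite form of the equation
  have heq' : ∀ q : ℕ, 1 ≤ q → (0:ℂ) = ∑ k ∈ R, ∑ l ∈ R, ∑ m ∈ R,
      (if k + l = m + q ∧ 1 ≤ k ∧ 1 ≤ l ∧ 1 ≤ m then
        (((min (min k l) (min m q) : ℕ) : ℂ) - 1) * b k * b l * (starRingEnd ℂ) (b m)
      else 0) := by
    intro q hq
    have hvan : ∀ t : ℕ × ℕ × ℕ, t ∉ (R ×ˢ R ×ˢ R : Finset (ℕ × ℕ × ℕ)) →
        (if t.1 + t.2.1 = t.2.2 + q ∧ 1 ≤ t.1 ∧ 1 ≤ t.2.1 ∧ 1 ≤ t.2.2 then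
          (((min (min t.1 t.2.1) (min t.2.2 q) : ℕ) : ℂ) - 1)
            * b t.1 * b t.2.1 * (starRingEnd ℂ) (b t.2.2)
        else 0) = 0 := by
      intro t ht
      by_cases hc : t.1 + t.2.1 = t.2.2 + q ∧ 1 ≤ t.1 ∧ 1 ≤ t.2.1 ∧ 1 ≤ t.2.2
      · rw [if_pos hc]
        have hmem : ¬ (t.1 ∈ R ∧ t.2.1 ∈ R ∧ t.2.2 ∈ R) := by
          intro h
          exact ht (Finset.mem_product.mpr ⟨h.1, Finset.mem_product.mpr ⟨h.2.1, h.2.2⟩⟩)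
        simp only [hRdef, Finset.mem_range, not_and_or, not_lt] at hmem
        rcases hmem with h | h | h
        · rw [hbgt t.1 (by omega)]; ring
        · rw [hbgt t.2.1 (by omega)]; ring
        · rw [hbgt t.2.2 (by omega), map_zero]; ring
      · rw [if_neg hc]
    have := heq q hq
    rw [tsum_eq_sum hvan] at this
    simpa only [Finset.sum_product] using this
  -- the square sums
  set S : ℕ → ℕ → ℂ := fun j n =>
    ∑ k ∈ R, ∑ l ∈ R, if k + l = n ∧ j ≤ k ∧ j ≤ l then b k * b l else 0 with hSdef
  -- normal form
  set NF : ℂ := ∑ p0 ∈ R, ∑ k ∈ R, ∑ l ∈ R, ∑ m ∈ R, ∑ j ∈ Finset.Icc 2 P,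
      (if k + l = m + p0 ∧ j ≤ k ∧ j ≤ l ∧ j ≤ m ∧ j ≤ p0 then
        b k * b l * (starRingEnd ℂ) (b m) * (starRingEnd ℂ) (b p0) else 0) with hNFdef
  have keyA : NF = 0 := by
    have hpt : ∀ p0 ∈ R, ∀ k ∈ R, ∀ l ∈ R, ∀ m ∈ R,
        (∑ j ∈ Finset.Icc 2 P,
          (if k + l = m + p0 ∧ j ≤ k ∧ j ≤ l ∧ j ≤ m ∧ j ≤ p0 then
            b k * b l * (starRingEnd ℂ) (b m) * (starRingEnd ℂ) (b p0) else 0))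
        = (starRingEnd ℂ) (b p0) *
          (if k + l = m + p0 ∧ 1 ≤ k ∧ 1 ≤ l ∧ 1 ≤ m then
            (((min (min k l) (min m p0) : ℕ) : ℂ) - 1) * b k * b l * (starRingEnd ℂ) (b m)
          else 0) := by
      intro p0 _ k hk l _ m _
      have hkP : k ≤ P := by
        have := Finset.mem_range.mp (hRdef ▸ hk); omega
      by_cases hc : k + l = m + p0 ∧ 1 ≤ k ∧ 1 ≤ l ∧ 1 ≤ m
      · by_cases hp0 : 1 ≤ p0
        · rw [if_pos hc, coeff_expand' P k l m p0 hkP hc.2.1 hc.2.2.1 hc.2.2.2 hp0,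
            Finset.sum_mul, Finset.sum_mul, Finset.sum_mul, Finset.mul_sum]
          refine Finset.sum_congr rfl fun j _ => ?_
          by_cases hD : j ≤ k ∧ j ≤ l ∧ j ≤ m ∧ j ≤ p0
          · rw [if_pos ⟨hc.1, hD⟩, if_pos hD]; ring
          · rw [if_neg (fun h => hD h.2), if_neg hD]; ring
        · have hp00 : p0 = 0 := by omega
          rw [hp00, hb0, map_zero, zero_mul]
          apply Finset.sum_eq_zero
          intro j hj
          rw [if_neg]
          rintro ⟨-, -, -, -, h5⟩
          have := (Finset.mem_Icc.mp hj).1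
          omega
      · rw [if_neg hc, mul_zero]
        apply Finset.sum_eq_zero
        intro j hj
        rw [if_neg]
        rintro ⟨h1, h2, h3, h4, -⟩
        have hj2 := (Finset.mem_Icc.mp hj).1
        exact hc ⟨h1, by omega, by omega, by omega⟩
    have hNF2 : NF = ∑ p0 ∈ R, (starRingEnd ℂ) (b p0) *
        (∑ k ∈ R, ∑ l ∈ R, ∑ m ∈ R,
          (if k + l = m + p0 ∧ 1 ≤ k ∧ 1 ≤ l ∧ 1 ≤ m then
            (((min (min k l) (min m p0) : ℕ) : ℂ) - 1) * b k * b l * (starRingEnd ℂ) (b m)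
          else 0)) := by
      rw [hNFdef]
      refine Finset.sum_congr rfl fun p0 hp0 => ?_
      rw [Finset.mul_sum]
      refine Finset.sum_congr rfl fun k hk => ?_
      rw [Finset.mul_sum]
      refine Finset.sum_congr rfl fun l hl => ?_
      rw [Finset.mul_sum]
      refine Finset.sum_congr rfl fun m hm => ?_
      exact hpt p0 hp0 k hk l hl m hm
    rw [hNF2]
    apply Finset.sum_eq_zero
    intro p0 _
    by_cases h : 1 ≤ p0
    · rw [← heq' p0 h, mul_zero]
    · have hp00 : p0 = 0 := by omega
      rw [hp00, hb0, map_zero, zero_mul]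
  have keyB : (∑ j ∈ Finset.Icc 2 P, ∑ n ∈ Finset.range (2*P+1),
      S j n * (starRingEnd ℂ) (S j n)) = NF := by
    have hconjS : ∀ j n, (starRingEnd ℂ) (S j n) = ∑ p0 ∈ R, ∑ m ∈ R,
        (if p0 + m = n ∧ j ≤ p0 ∧ j ≤ m then
          (starRingEnd ℂ) (b p0) * (starRingEnd ℂ) (b m) else 0) := by
      intro j n
      simp only [hSdef, map_sum, apply_ite (starRingEnd ℂ), map_mul, map_zero]
    have hprod : ∀ j n, S j n * (starRingEnd ℂ) (S j n) =
        ∑ p0 ∈ R, ∑ m ∈ R, ∑ k ∈ R, ∑ l ∈ R,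
          ((if p0 + m = n ∧ j ≤ p0 ∧ j ≤ m then
            (starRingEnd ℂ) (b p0) * (starRingEnd ℂ) (b m) else 0)
          * (if k + l = n ∧ j ≤ k ∧ j ≤ l then b k * b l else 0)) := by
      intro j n
      rw [mul_comm, hconjS, Finset.sum_mul]
      refine Finset.sum_congr rfl fun p0 _ => ?_
      rw [Finset.sum_mul]
      refine Finset.sum_congr rfl fun m _ => ?_
      simp only [hSdef, Finset.mul_sum]
    have hcol : ∀ j, ∀ p0 ∈ R, ∀ m ∈ R, ∀ k : ℕ, ∀ l : ℕ,
        (∑ n ∈ Finset.range (2*P+1),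
          ((if p0 + m = n ∧ j ≤ p0 ∧ j ≤ m then
            (starRingEnd ℂ) (b p0) * (starRingEnd ℂ) (b m) else 0)
          * (if k + l = n ∧ j ≤ k ∧ j ≤ l then b k * b l else 0)))
        = (if k + l = m + p0 ∧ j ≤ k ∧ j ≤ l ∧ j ≤ m ∧ j ≤ p0 then
            b k * b l * (starRingEnd ℂ) (b m) * (starRingEnd ℂ) (b p0) else 0) := by
      intro j p0 hp0 m hm k l
      have hp0P : p0 ≤ P := by
        have := Finset.mem_range.mp (hRdef ▸ hp0); omega
      have hmP : m ≤ P := by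
        have := Finset.mem_range.mp (hRdef ▸ hm); omega
      rw [Finset.sum_eq_single_of_mem (p0 + m) (Finset.mem_range.mpr (by omega))]
      · by_cases h1 : j ≤ p0 ∧ j ≤ m
        · rw [if_pos ⟨rfl, h1⟩]
          by_cases h2 : k + l = p0 + m ∧ j ≤ k ∧ j ≤ l
          · rw [if_pos h2, if_pos ⟨by omega, h2.2.1, h2.2.2, h1.2, h1.1⟩]; ring
          · rw [if_neg h2, mul_zero, if_neg]
            rintro ⟨g1, g2, g3, -, -⟩
            exact h2 ⟨by omega, g2, g3⟩
        · rw [if_neg (fun h => h1 h.2), zero_mul, if_neg]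
          rintro ⟨-, -, -, g4, g5⟩
          exact h1 ⟨g5, g4⟩
      · intro n _ hne
        rw [if_neg, zero_mul]
        rintro ⟨g1, -⟩
        exact hne g1.symm
    calc (∑ j ∈ Finset.Icc 2 P, ∑ n ∈ Finset.range (2*P+1),
            S j n * (starRingEnd ℂ) (S j n))
        = ∑ j ∈ Finset.Icc 2 P, ∑ n ∈ Finset.range (2*P+1),
            ∑ p0 ∈ R, ∑ m ∈ R, ∑ k ∈ R, ∑ l ∈ R,
              ((if p0 + m = n ∧ j ≤ p0 ∧ j ≤ m then
                (starRingEnd ℂ) (b p0) * (starRingEnd ℂ) (b m) else 0)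
              * (if k + l = n ∧ j ≤ k ∧ j ≤ l then b k * b l else 0)) :=
          Finset.sum_congr rfl fun j _ => Finset.sum_congr rfl fun n _ => hprod j n
      _ = ∑ j ∈ Finset.Icc 2 P, ∑ p0 ∈ R, ∑ m ∈ R, ∑ k ∈ R, ∑ l ∈ R,
            ∑ n ∈ Finset.range (2*P+1),
              ((if p0 + m = n ∧ j ≤ p0 ∧ j ≤ m then
                (starRingEnd ℂ) (b p0) * (starRingEnd ℂ) (b m) else 0)
              * (if k + l = n ∧ j ≤ k ∧ j ≤ l then b k * b l else 0)) :=
          Finset.sum_congr rfl fun j _ => (sumrot5' R R R R (Finset.range (2*P+1)) _).symm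
      _ = ∑ j ∈ Finset.Icc 2 P, ∑ p0 ∈ R, ∑ m ∈ R, ∑ k ∈ R, ∑ l ∈ R,
            (if k + l = m + p0 ∧ j ≤ k ∧ j ≤ l ∧ j ≤ m ∧ j ≤ p0 then
              b k * b l * (starRingEnd ℂ) (b m) * (starRingEnd ℂ) (b p0) else 0) :=
          Finset.sum_congr rfl fun j _ => Finset.sum_congr rfl fun p0 hp0 =>
            Finset.sum_congr rfl fun m hm => Finset.sum_congr rfl fun k _ =>
              Finset.sum_congr rfl fun l _ => hcol j p0 hp0 m hm k l
      _ = ∑ p0 ∈ R, ∑ m ∈ R, ∑ k ∈ R, ∑ l ∈ R, ∑ j ∈ Finset.Icc 2 P,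
            (if k + l = m + p0 ∧ j ≤ k ∧ j ≤ l ∧ j ≤ m ∧ j ≤ p0 then
              b k * b l * (starRingEnd ℂ) (b m) * (starRingEnd ℂ) (b p0) else 0) :=
          (sumrot5' R R R R (Finset.Icc 2 P) _).symm
      _ = NF := by
          rw [hNFdef]
          exact Finset.sum_congr rfl fun p0 _ => (sumrot3' R R R _).symm
  have key : (∑ j ∈ Finset.Icc 2 P, ∑ n ∈ Finset.range (2*P+1),
      S j n * (starRingEnd ℂ) (S j n)) = 0 := keyB.trans keyA
  -- positivity
  have hSsq : ∀ j n, S j n * (starRingEnd ℂ) (S j n) = (Complex.normSq (S j n) : ℂ) := by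
    intro j n; exact Complex.mul_conj _
  have hreal : (∑ j ∈ Finset.Icc 2 P, ∑ n ∈ Finset.range (2*P+1),
      Complex.normSq (S j n)) = 0 := by
    have : ((∑ j ∈ Finset.Icc 2 P, ∑ n ∈ Finset.range (2*P+1),
        Complex.normSq (S j n) : ℝ) : ℂ) = 0 := by
      push_cast
      rw [← key]
      exact Finset.sum_congr rfl fun j _ => Finset.sum_congr rfl fun n _ => (hSsq j n).symm
    exact_mod_cast this
  have hSzero : S P (2*P) = 0 := by
    have h1 : ∀ j ∈ Finset.Icc 2 P, (0:ℝ) ≤ ∑ n ∈ Finset.range (2*P+1),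
        Complex.normSq (S j n) :=
      fun j _ => Finset.sum_nonneg fun n _ => Complex.normSq_nonneg _
    have h2 := (Finset.sum_eq_zero_iff_of_nonneg h1).mp hreal P
      (Finset.mem_Icc.mpr ⟨hP2, le_refl P⟩)
    have h3 := (Finset.sum_eq_zero_iff_of_nonneg
      (fun n _ => Complex.normSq_nonneg (S P n))).mp h2 (2*P)
      (Finset.mem_range.mpr (by omega))
    exact Complex.normSq_eq_zero.mp h3
  -- compute S P (2P) = b P * b P
  have hScomp : S P (2*P) = b P * b P := by
    simp only [hSdef]
    have hPR : P ∈ R := by rw [hRdef]; exact Finset.mem_range.mpr (by omega)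
    rw [Finset.sum_eq_single_of_mem P hPR]
    · rw [Finset.sum_eq_single_of_mem P hPR]
      · rw [if_pos ⟨by ring, le_refl P, le_refl P⟩]
      · intro l hl hlne
        rw [if_neg]
        rintro ⟨h1, _, h3⟩
        exact hlne (by omega)
    · intro k hk hkne
      apply Finset.sum_eq_zero
      intro l hl
      rw [if_neg]
      rintro ⟨h1, h2, h3⟩
      have := Finset.mem_range.mp (hRdef ▸ hk)
      exact hkne (by omega)
  rw [hScomp] at hSzero
  exact hbP (mul_self_eq_zero.mp hSzero)
end
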